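/- arXiv:2604.21049 — 4 statements merged into one kernel-verified Lean document; each statement's English description precedes it below -/
import Mathlib

section
/- Let (X, Σ, m) be a probability space and {f_i}_{i∈I} ⊆ L^0(Σ) a (possibly uncountable) family of real-valued measurable functions such that sup_{i∈I} |f_i(x)| < +∞ for every x ∈ X. Then the family of equivalence classes {[f_i]_m : i ∈ I} is order bounded in L^0(m), i.e. there exists g ∈ L^0(m) with |[f_i]_m| ≤ g for all i ∈ I. -/
open Filter Set Topology Function
open MeasureTheory (Measure IsProbabilityMeasure)

noncomputable section

namespace RNMPaper

/-- max of `|f i|` over a list of indices, `0` for the empty list. -/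
private def Fl {X ι : Type*} (f : ι → X → ℝ) : List ι → X → ℝ
  | [] => fun _ => 0
  | i :: l => fun x => max |f i x| (Fl f l x)

private lemma Fl_nonneg {X ι : Type*} (f : ι → X → ℝ) (l : List ι) (x : X) :
    0 ≤ Fl f l x := by
  induction l with
  | nil => simp [Fl]
  | cons i l ih => exact le_max_of_le_right ih

private lemma Fl_append {X ι : Type*} (f : ι → X → ℝ) (a b : List ι) (x : X) :
    Fl f (a ++ b) x = max (Fl f a x) (Fl f b x) := by
  induction a with
  | nil => simp [Fl, max_eq_right (Fl_nonneg f b x)]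
  | cons i a ih => simp [Fl, ih, max_assoc]

private lemma mem_le_Fl {X ι : Type*} (f : ι → X → ℝ) {i : ι} {l : List ι}
    (hi : i ∈ l) (x : X) : |f i x| ≤ Fl f l x := by
  induction l with
  | nil => simp at hi
  | cons j l ih =>
    rcases List.mem_cons.1 hi with h | h
    · subst h; exact le_max_left _ _
    · exact le_max_of_le_right (ih h)

private lemma measurable_Fl {X ι : Type*} [MeasurableSpace X] {f : ι → X → ℝ}
    (hf : ∀ i, Measurable (f i)) (l : List ι) : Measurable (Fl f l) := by
  induction l with
  | nil => exact measurable_const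
  | cons i l ih => exact ((hf i).abs).max ih

private lemma Fl_le_bound {X ι : Type*} {f : ι → X → ℝ} {x : X} {b : ℝ}
    (hb : ∀ i, |f i x| ≤ b) (l : List ι) : Fl f l x ≤ max b 0 := by
  induction l with
  | nil => simp [Fl]
  | cons i l ih => exact max_le (le_max_of_le_left (hb i)) ih

/-- Let `(X, Σ, m)` be a probability space and `{f_i}_{i ∈ ι}` a (possibly
uncountable) family of real-valued measurable functions such that `sup_i |f_i x| < ∞` for
every `x ∈ X`.  Then the family of a.e.-equivalence classes `{[f_i]_m : i ∈ ι}` is order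
bounded in `L⁰(m)`: there is `g ∈ L⁰(m)` with `|[f_i]_m| ≤ g` for all `i`. -/
theorem statement0 {X : Type*} [MeasurableSpace X] (m : Measure X) [IsProbabilityMeasure m]
    {ι : Type*} (f : ι → X → ℝ) (hf : ∀ i, Measurable (f i))
    (hbdd : ∀ x : X, BddAbove (Set.range fun i => |f i x|)) :
    ∃ g : X →ₘ[m] ℝ, ∀ i,
      |MeasureTheory.AEEqFun.mk (f i)
        ((hf i).aestronglyMeasurable : MeasureTheory.AEStronglyMeasurable (f i) m)| ≤ g := by
  classical
  -- pointwise bound for all list-suprema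
  have hFbd : ∀ x, BddAbove (Set.range fun l : List ι => Fl f l x) := by
    intro x
    obtain ⟨b, hb⟩ := hbdd x
    refine ⟨max b 0, ?_⟩
    rintro _ ⟨l, rfl⟩
    exact Fl_le_bound (fun i => hb ⟨i, rfl⟩) l
  -- integrability of arctan of any measurable function
  have hint : ∀ (h : X → ℝ), Measurable h →
      MeasureTheory.Integrable (fun x => Real.arctan (h x)) m := by
    intro h hh
    refine (MeasureTheory.integrable_const (Real.pi / 2)).mono'
      ((Real.measurable_arctan.comp hh).aestronglyMeasurable)
      (MeasureTheory.ae_of_all _ fun x => ?_)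
    rw [Real.norm_eq_abs, abs_le]
    exact ⟨(Real.neg_pi_div_two_lt_arctan _).le, (Real.arctan_lt_pi_div_two _).le⟩
  set J : List ι → ℝ := fun l => ∫ x, Real.arctan (Fl f l x) ∂m with hJ
  have hJbd : BddAbove (Set.range J) := by
    refine ⟨Real.pi / 2, ?_⟩
    rintro _ ⟨l, rfl⟩
    calc J l ≤ ∫ _, Real.pi / 2 ∂m :=
          MeasureTheory.integral_mono (hint _ (measurable_Fl hf l))
            (MeasureTheory.integrable_const _)
            (fun x => (Real.arctan_lt_pi_div_two _).le)
      _ ≤ Real.pi / 2 := by simp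
  have hJne : (Set.range J).Nonempty := ⟨J [], ⟨[], rfl⟩⟩
  set c : ℝ := sSup (Set.range J) with hc
  have hJlec : ∀ l, J l ≤ c := fun l => le_csSup hJbd ⟨l, rfl⟩
  obtain ⟨u, hu_mono, hu_tend, hu_mem⟩ := exists_seq_tendsto_sSup hJne hJbd
  choose l hl using fun n => hu_mem n
  -- cumulative lists
  set L : ℕ → List ι := fun n => Nat.rec (l 0) (fun k acc => acc ++ l (k + 1)) n with hL
  have hLsucc : ∀ n, L (n + 1) = L n ++ l (n + 1) := fun n => rfl
  have hLmono : ∀ x, Monotone fun n => Fl f (L n) x := by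
    intro x
    refine monotone_nat_of_le_succ fun n => ?_
    rw [hLsucc, Fl_append]; exact le_max_left _ _
  have hlleL : ∀ n x, Fl f (l n) x ≤ Fl f (L n) x := by
    intro n x
    cases n with
    | zero => exact le_rfl
    | succ k => rw [hLsucc, Fl_append]; exact le_max_right _ _
  have hLbd : ∀ x, BddAbove (Set.range fun n => Fl f (L n) x) := by
    intro x
    exact (hFbd x).mono (by rintro _ ⟨n, rfl⟩; exact ⟨L n, rfl⟩)
  set g0 : X → ℝ := fun x => ⨆ n, Fl f (L n) x with hg0
  have hg0_tend : ∀ x, Tendsto (fun n => Fl f (L n) x) atTop (nhds (g0 x)) :=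
    fun x => tendsto_atTop_ciSup (hLmono x) (hLbd x)
  have hg0_meas : Measurable g0 :=
    measurable_of_tendsto_metrizable (fun n => measurable_Fl hf (L n))
      (tendsto_pi_nhds.2 hg0_tend)
  -- dominated convergence helper
  have hdom : ∀ (G : ℕ → X → ℝ) (gl : X → ℝ), (∀ n, Measurable (G n)) →
      (∀ x, Tendsto (fun n => G n x) atTop (nhds (gl x))) →
      Tendsto (fun n => ∫ x, Real.arctan (G n x) ∂m) atTop
        (nhds (∫ x, Real.arctan (gl x) ∂m)) := by
    intro G gl hGm hGt
    refine MeasureTheory.tendsto_integral_of_dominated_convergence (fun _ => Real.pi / 2)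
      (fun n => (Real.measurable_arctan.comp (hGm n)).aestronglyMeasurable)
      (MeasureTheory.integrable_const _)
      (fun n => MeasureTheory.ae_of_all _ fun x => ?_)
      (MeasureTheory.ae_of_all _ fun x =>
        (Real.continuous_arctan.continuousAt.tendsto).comp (hGt x))
    rw [Real.norm_eq_abs, abs_le]
    exact ⟨(Real.neg_pi_div_two_lt_arctan _).le, (Real.arctan_lt_pi_div_two _).le⟩
  -- ∫ arctan g0 = c
  have hJL_tend : Tendsto (fun n => J (L n)) atTop (nhds (∫ x, Real.arctan (g0 x) ∂m)) :=
    hdom (fun n => Fl f (L n)) g0 (fun n => measurable_Fl hf (L n)) hg0_tend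
  have hJL_c : Tendsto (fun n => J (L n)) atTop (nhds c) := by
    have h1 : ∀ n, u n ≤ J (L n) := by
      intro n
      rw [← hl n]
      exact MeasureTheory.integral_mono (hint _ (measurable_Fl hf (l n)))
        (hint _ (measurable_Fl hf (L n)))
        (fun x => Real.arctan_strictMono.monotone (hlleL n x))
    exact tendsto_of_tendsto_of_tendsto_of_le_of_le hu_tend tendsto_const_nhds h1
      (fun n => hJlec (L n))
  have hIg0 : ∫ x, Real.arctan (g0 x) ∂m = c := tendsto_nhds_unique hJL_tend hJL_c
  -- key a.e. bound
  have hae : ∀ i, ∀ᵐ x ∂m, |f i x| ≤ g0 x := by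
    intro i
    set h : X → ℝ := fun x => max (g0 x) |f i x| with hh
    have hh_meas : Measurable h := hg0_meas.max (hf i).abs
    have hK_tend : ∀ x, Tendsto (fun n => Fl f (L n ++ [i]) x) atTop (nhds (h x)) := by
      intro x
      have : ∀ n, Fl f (L n ++ [i]) x = max (Fl f (L n) x) |f i x| := by
        intro n
        rw [Fl_append]
        congr 1
        show max |f i x| 0 = |f i x|
        exact max_eq_left (abs_nonneg _)
      simp only [this]
      exact (hg0_tend x).max tendsto_const_nhds
    have hJK : Tendsto (fun n => J (L n ++ [i])) atTop (nhds (∫ x, Real.arctan (h x) ∂m)) :=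
      hdom _ h (fun n => measurable_Fl hf _) hK_tend
    have hIh_le : ∫ x, Real.arctan (h x) ∂m ≤ c :=
      le_of_tendsto hJK (Filter.Eventually.of_forall fun n => hJlec _)
    have hint_h := hint h hh_meas
    have hint_g0 := hint g0 hg0_meas
    have hnonneg : 0 ≤ fun x => Real.arctan (h x) - Real.arctan (g0 x) := by
      intro x
      simp only [Pi.zero_apply, sub_nonneg]
      exact Real.arctan_strictMono.monotone (le_max_left _ _)
    have hmono : ∫ x, Real.arctan (g0 x) ∂m ≤ ∫ x, Real.arctan (h x) ∂m :=
      MeasureTheory.integral_mono hint_g0 hint_h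
        (fun x => Real.arctan_strictMono.monotone (le_max_left _ _))
    have hzero : ∫ x, (Real.arctan (h x) - Real.arctan (g0 x)) ∂m = 0 := by
      rw [MeasureTheory.integral_sub hint_h hint_g0]
      linarith [hIh_le, hIg0 ▸ hmono, hIg0]
    have := (MeasureTheory.integral_eq_zero_iff_of_nonneg hnonneg (hint_h.sub hint_g0)).1 hzero
    filter_upwards [this] with x hx
    simp only [Pi.zero_apply, sub_eq_zero] at hx
    have : h x = g0 x := Real.arctan_injective hx
    calc |f i x| ≤ h x := le_max_right _ _
      _ = g0 x := this
  refine ⟨MeasureTheory.AEEqFun.mk g0 hg0_meas.aestronglyMeasurable, fun i => ?_⟩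
  rw [← MeasureTheory.AEEqFun.coeFn_le]
  filter_upwards [MeasureTheory.AEEqFun.coeFn_abs
      (MeasureTheory.AEEqFun.mk (f i) (hf i).aestronglyMeasurable),
    MeasureTheory.AEEqFun.coeFn_mk (f i) (hf i).aestronglyMeasurable,
    MeasureTheory.AEEqFun.coeFn_mk g0 hg0_meas.aestronglyMeasurable, hae i]
    with x h1 h2 h3 h4
  rw [h1, h2, h3]
  exact h4

end RNMPaper
end
end

section
/- Let (M, |·|) be a complete random normed module over L^0(m). If {v_n : n ∈ ℕ} ⊆ M is a sequence such that {|v_n| : n ∈ ℕ} ⊆ L^0_+(m) is summable (i.e. the partial sums of |v_n| are order bounded in L^0(m)), then {v_n : n ∈ ℕ} is summable in M and |∑_{n∈ℕ} v_n| ≤ ∑_{n∈ℕ} |v_n|. -/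
open Filter Set Topology Function
open MeasureTheory (Measure IsProbabilityMeasure)

noncomputable section

namespace RNMPaper

variable {X : Type*} [MeasurableSpace X]

/-- The canonical distance on `L⁰(m)`, `d(f,g) = ∫ |f-g| ∧ 1 dm`. -/
def dL0 (m : Measure X) (f g : X →ₘ[m] ℝ) : ℝ := ∫ x, min |f x - g x| 1 ∂m

/-- Convergence of a sequence in `L⁰(m)` (i.e. convergence in measure). -/
def TendstoL0 (m : Measure X) (f : ℕ → X →ₘ[m] ℝ) (g : X →ₘ[m] ℝ) : Prop :=
  Tendsto (fun n => dL0 m (f n) g) atTop (𝓝 0)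

/-- `S` is the sum of the (nonnegative) sequence `f` in `L⁰(m)`: the least upper bound
of the partial sums. -/
def HasL0Sum (m : Measure X) (f : ℕ → X →ₘ[m] ℝ) (S : X →ₘ[m] ℝ) : Prop :=
  IsLUB (Set.range fun n => ∑ i ∈ Finset.range n, f i) S

/-- A random normed module with base probability space `(X, Σ, m)`: an `L⁰(m)`-module
with an `L⁰`-norm. -/
structure RNMod (m : Measure X) where
  M : Type*
  [grp : AddCommGroup M]
  smul : (X →ₘ[m] ℝ) → M → M
  nrm : M → X →ₘ[m] ℝ
  smul_add : ∀ f v w, smul f (v + w) = smul f v + smul f w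
  add_smul : ∀ f g v, smul (f + g) v = smul f v + smul g v
  one_smul : ∀ v, smul 1 v = v
  mul_smul : ∀ f g v, smul (f * g) v = smul f (smul g v)
  nrm_nonneg : ∀ v, 0 ≤ nrm v
  nrm_eq_zero : ∀ v, nrm v = 0 ↔ v = 0
  nrm_add_le : ∀ v w, nrm (v + w) ≤ nrm v + nrm w
  nrm_smul : ∀ f v, nrm (smul f v) = |f| * nrm v

attribute [instance] RNMod.grp

/-- The distance on a random normed module. -/
def RNMod.dist {m : Measure X} (R : RNMod m) (v w : R.M) : ℝ := dL0 m (R.nrm (v - w)) 0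

/-- Completeness of a random normed module: every Cauchy sequence converges. -/
def RNMod.Complete {m : Measure X} (R : RNMod m) : Prop :=
  ∀ v : ℕ → R.M, (∀ ε > (0:ℝ), ∃ N, ∀ p ≥ N, ∀ q ≥ N, R.dist (v p) (v q) < ε) →
    ∃ w : R.M, Tendsto (fun n => R.dist (v n) w) atTop (𝓝 0)

variable {Ω : Type*}

/-- An `L⁰(m)`-valued measure on the measurable space `Ω` (the values on non-measurable
sets are irrelevant): `μ ∅ = 0` and, for every sequence of pairwise disjoint measurable
sets, the norms `|μ (A n)|` are summable (partial sums order bounded) and the finite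
partial sums of `μ (A n)` converge (as a net over finite subsets, in the metric of
`L⁰(m)`) to `μ (⋃ n, A n)`. -/
structure L0Measure (m : Measure X) (Ω : Type*) [MeasurableSpace Ω] where
  toFun : Set Ω → X →ₘ[m] ℝ
  empty' : toFun ∅ = 0
  summable' : ∀ A : ℕ → Set Ω, (∀ n, MeasurableSet (A n)) → Pairwise (Disjoint on A) →
    BddAbove (Set.range fun n => ∑ i ∈ Finset.range n, |toFun (A i)|)
  additive' : ∀ A : ℕ → Set Ω, (∀ n, MeasurableSet (A n)) → Pairwise (Disjoint on A) →
    Tendsto (fun F : Finset ℕ => dL0 m (∑ i ∈ F, toFun (A i)) (toFun (⋃ n, A n)))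
      atTop (𝓝 0)

/-- The collection of all sums `∑ₙ |μ (B n)|` over countable measurable partitions
`(B n)` of `A` (those sums that exist in `L⁰(m)`, as least upper bounds of partial sums). -/
def partitionSums (m : Measure X) [MeasurableSpace Ω] (μ : Set Ω → X →ₘ[m] ℝ) (A : Set Ω) :
    Set (X →ₘ[m] ℝ) :=
  {g | ∃ B : ℕ → Set Ω, (∀ n, MeasurableSet (B n)) ∧ Pairwise (Disjoint on B) ∧
    (⋃ n, B n) = A ∧ HasL0Sum m (fun n => |μ (B n)|) g}

/-- `t` is the total variation `|μ|(A)` of `μ` on `A`: `t` dominates all partial sums over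
all countable measurable partitions of `A` (so each partition sum exists in `L⁰(m)` and is
`≤ t`), and `t` is the least upper bound of the set of partition sums. -/
def HasTV (m : Measure X) [MeasurableSpace Ω] (μ : Set Ω → X →ₘ[m] ℝ) (A : Set Ω)
    (t : X →ₘ[m] ℝ) : Prop :=
  (∀ B : ℕ → Set Ω, (∀ n, MeasurableSet (B n)) → Pairwise (Disjoint on B) →
    (⋃ n, B n) = A → ∀ n, ∑ i ∈ Finset.range n, |μ (B i)| ≤ t) ∧
  IsLUB (partitionSums m μ A) t

/-- An `L⁰(m)`-valued measure of bounded variation, bundled together with its total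
variation `L⁰`-valued measure `tv = |μ|`. -/
structure BVMeasure (m : Measure X) (Ω : Type*) [MeasurableSpace Ω] extends L0Measure m Ω where
  tv : Set Ω → X →ₘ[m] ℝ
  htv : ∀ A, MeasurableSet A → HasTV m toFun A (tv A)


/-- The set of values `| s − (∑_{i<n} v i + ∑_{i∈F} v i) |` over finite `F ⊆ {n, n+1, …}`. -/
def tailSet {X : Type*} [MeasurableSpace X] {m : Measure X} (R : RNMod m)
    (v : ℕ → R.M) (s : R.M) (n : ℕ) : Set (X →ₘ[m] ℝ) :=
  {g | ∃ F : Finset ℕ, (∀ i ∈ F, n ≤ i) ∧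
    g = R.nrm (s - (∑ i ∈ Finset.range n, v i + ∑ i ∈ F, v i))}

/-- `{v n : n ∈ ℕ}` is summable with sum `s` in the random normed module `R`:
the suprema `⋁_{F ⊆ {n,…}} |s − ∑_{{0,…,n-1} ∪ F} v i|` exist and converge to `0` in `L⁰(m)`. -/
def HasRNMSum {X : Type*} [MeasurableSpace X] {m : Measure X} (R : RNMod m)
    (v : ℕ → R.M) (s : R.M) : Prop :=
  ∃ b : ℕ → X →ₘ[m] ℝ, (∀ n, IsLUB (tailSet R v s n) (b n)) ∧ TendstoL0 m b 0


section Aux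

open MeasureTheory

variable {X : Type*} [MeasurableSpace X] {m : Measure X}

lemma coeFn_sum' {ι : Type*} (s : Finset ι) (g : ι → X →ₘ[m] ℝ) :
    ⇑(∑ i ∈ s, g i) =ᵐ[m] fun x => ∑ i ∈ s, g i x := by
  induction s using Finset.cons_induction with
  | empty => simp only [Finset.sum_empty]; exact MeasureTheory.AEEqFun.coeFn_zero (β := ℝ) (μ := m)
  | cons i s hi ih =>
    rw [Finset.sum_cons]
    filter_upwards [MeasureTheory.AEEqFun.coeFn_add (g i) (∑ j ∈ s, g j), ih] with x h1 h2
    simp only [Finset.sum_cons, h1, Pi.add_apply, h2]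

lemma add_le_addL {a b c d : X →ₘ[m] ℝ} (h1 : a ≤ b) (h2 : c ≤ d) : a + c ≤ b + d := by
  rw [← AEEqFun.coeFn_le] at h1 h2 ⊢
  filter_upwards [h1, h2, AEEqFun.coeFn_add a c, AEEqFun.coeFn_add b d] with x k1 k2 k3 k4
  rw [k3, k4]; exact add_le_add k1 k2

lemma sub_le_subL {a b c d : X →ₘ[m] ℝ} (h1 : a ≤ b) (h2 : d ≤ c) : a - c ≤ b - d := by
  rw [← AEEqFun.coeFn_le] at h1 h2 ⊢
  filter_upwards [h1, h2, AEEqFun.coeFn_sub a c, AEEqFun.coeFn_sub b d] with x k1 k2 k3 k4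
  rw [k3, k4]; exact sub_le_sub k1 k2

lemma integrable_trunc [IsProbabilityMeasure m] (f : X →ₘ[m] ℝ) :
    MeasureTheory.Integrable (fun x => min |f x| 1) m := by
  refine MeasureTheory.Integrable.mono' (MeasureTheory.integrable_const 1) ?_ ?_
  · exact (f.measurable.abs.min measurable_const).aestronglyMeasurable
  · refine Filter.Eventually.of_forall fun x => ?_
    have h1 : (0:ℝ) ≤ min |f x| 1 := le_min (abs_nonneg _) zero_le_one
    simpa [Real.norm_eq_abs, abs_of_nonneg h1] using min_le_right |f x| (1:ℝ)

lemma trunc_nonneg [IsProbabilityMeasure m] (f : X →ₘ[m] ℝ) :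
    0 ≤ ∫ x, min |f x| 1 ∂m :=
  MeasureTheory.integral_nonneg fun x => le_min (abs_nonneg _) zero_le_one

lemma trunc_mono [IsProbabilityMeasure m] {a b : X →ₘ[m] ℝ} (h0 : 0 ≤ a) (h : a ≤ b) :
    ∫ x, min |a x| 1 ∂m ≤ ∫ x, min |b x| 1 ∂m := by
  refine MeasureTheory.integral_mono_ae (integrable_trunc a) (integrable_trunc b) ?_
  filter_upwards [AEEqFun.coeFn_le.2 h0, AEEqFun.coeFn_le.2 h,
    AEEqFun.coeFn_zero (β := ℝ) (μ := m)] with x k0 k1 k2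
  rw [k2] at k0
  simp only [Pi.zero_apply] at k0
  have : |a x| ≤ |b x| := by
    rw [abs_of_nonneg k0, abs_of_nonneg (k0.trans k1)]; exact k1
  exact min_le_min this le_rfl

lemma tendsto_trunc [IsProbabilityMeasure m] (c : ℕ → X →ₘ[m] ℝ)
    (h : ∀ᵐ x ∂m, Tendsto (fun n => c n x) atTop (𝓝 0)) :
    Tendsto (fun n => ∫ x, min |c n x| 1 ∂m) atTop (𝓝 0) := by
  have key := MeasureTheory.tendsto_integral_of_dominated_convergence
    (F := fun n x => min |c n x| 1) (f := fun _ => (0 : ℝ)) (bound := fun _ => (1 : ℝ))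
    (fun n => ((c n).measurable.abs.min measurable_const).aestronglyMeasurable)
    (MeasureTheory.integrable_const (μ := m) 1)
    (fun n => Filter.Eventually.of_forall fun x => by
      have h1 : (0:ℝ) ≤ min |(c n) x| 1 := le_min (abs_nonneg _) zero_le_one
      simpa [Real.norm_eq_abs, abs_of_nonneg h1] using min_le_right |(c n) x| (1:ℝ))
    ?_
  · simpa using key
  · filter_upwards [h] with x hx
    have : Tendsto (fun n => min |c n x| 1) atTop (𝓝 (min |(0:ℝ)| 1)) :=
      (hx.abs).min tendsto_const_nhds
    simpa using this

lemma le_of_bound [IsProbabilityMeasure m] {a b : X →ₘ[m] ℝ} {c : ℕ → X →ₘ[m] ℝ}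
    (hc0 : ∀ r, (0 : X →ₘ[m] ℝ) ≤ c r) (hc : ∀ r, a ≤ b + c r)
    (h : Tendsto (fun r => ∫ x, min |c r x| 1 ∂m) atTop (𝓝 0)) : a ≤ b := by
  set w : X →ₘ[m] ℝ := (a - b) ⊔ 0 with hw
  have hw0 : (0 : X →ₘ[m] ℝ) ≤ w := le_sup_right
  have hwle : ∀ r, w ≤ c r := by
    intro r
    rw [← AEEqFun.coeFn_le]
    filter_upwards [AEEqFun.coeFn_sup (a - b) 0, AEEqFun.coeFn_sub a b,
      AEEqFun.coeFn_zero (β := ℝ) (μ := m), AEEqFun.coeFn_le.2 (hc r),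
      AEEqFun.coeFn_le.2 (hc0 r), AEEqFun.coeFn_add b (c r)] with x k1 k2 k3 k4 k5 k6
    rw [k6] at k4
    rw [k3] at k5
    simp only [Pi.sub_apply, Pi.zero_apply, Pi.add_apply] at k2 k4 k5
    have : (w : X → ℝ) x = (a x - b x) ⊔ 0 := by rw [hw, k1, k2, k3]; simp
    rw [this]
    exact sup_le (by linarith) k5
  have hIw0 : (0:ℝ) ≤ ∫ x, min |w x| 1 ∂m := trunc_nonneg w
  have hIwle : ∫ x, min |w x| 1 ∂m ≤ 0 :=
    ge_of_tendsto h (Filter.Eventually.of_forall fun r => trunc_mono hw0 (hwle r))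
  have hIw : ∫ x, min |w x| 1 ∂m = 0 := le_antisymm hIwle hIw0
  have hae : (fun x => min |w x| 1) =ᵐ[m] 0 := by
    rw [← MeasureTheory.integral_eq_zero_iff_of_nonneg
      (fun x => le_min (abs_nonneg _) zero_le_one) (integrable_trunc w)]
    exact hIw
  rw [← AEEqFun.coeFn_le]
  filter_upwards [hae, AEEqFun.coeFn_sup (a - b) 0, AEEqFun.coeFn_sub a b,
    AEEqFun.coeFn_zero (β := ℝ) (μ := m)] with x k0 k1 k2 k3
  simp only [Pi.zero_apply] at k0
  have hwx : (w : X → ℝ) x = 0 := by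
    rcases le_or_gt 1 |(w : X → ℝ) x| with hcase | hcase
    · exfalso; rw [min_eq_right hcase] at k0; linarith
    · rw [min_eq_left hcase.le] at k0; exact abs_eq_zero.1 k0
  have hsup : (a x - b x) ⊔ 0 = 0 := by
    rw [hw] at hwx
    rw [k1] at hwx
    simp only [Pi.sub_apply, Pi.zero_apply] at k2
    rw [k2, k3] at hwx
    simpa using hwx
  have : a x - b x ≤ 0 := by
    by_contra hcon
    push_neg at hcon
    rw [sup_eq_left.2 hcon.le] at hsup
    linarith
  linarith

lemma exists_isLUB_countable {ι : Type*} [Countable ι] [Nonempty ι]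
    (e : ι → X →ₘ[m] ℝ) (B : X →ₘ[m] ℝ) (hB : ∀ i, e i ≤ B) :
    ∃ g : X →ₘ[m] ℝ, IsLUB (Set.range e) g ∧
      ∀ᵐ x ∂m, g x = ⨆ i, min (e i x) (B x) := by
  have hUmeas : Measurable (fun x => ⨆ i, min (e i x) (B x)) :=
    Measurable.iSup fun i => (e i).measurable.min B.measurable
  have hUbdd : ∀ x, BddAbove (Set.range fun i => min (e i x) (B x)) := fun x =>
    ⟨B x, by rintro r ⟨i, rfl⟩; exact min_le_right _ _⟩
  set g := AEEqFun.mk (fun x => ⨆ i, min (e i x) (B x)) hUmeas.aestronglyMeasurable with hg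
  have hgU : ⇑g =ᵐ[m] fun x => ⨆ i, min (e i x) (B x) := AEEqFun.coeFn_mk _ _
  have hae : ∀ᵐ x ∂m, ∀ i, e i x ≤ B x :=
    MeasureTheory.ae_all_iff.2 fun i => AEEqFun.coeFn_le.2 (hB i)
  refine ⟨g, ⟨?_, ?_⟩, hgU⟩
  · rintro y ⟨i, rfl⟩
    rw [← AEEqFun.coeFn_le]
    filter_upwards [hgU, hae] with x hx hx2
    calc e i x = min (e i x) (B x) := (min_eq_left (hx2 i)).symm
    _ ≤ ⨆ j, min (e j x) (B x) := le_ciSup (hUbdd x) i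
    _ = g x := hx.symm
  · intro C hC
    have hCae : ∀ᵐ x ∂m, ∀ i, e i x ≤ C x :=
      MeasureTheory.ae_all_iff.2 fun i => AEEqFun.coeFn_le.2 (hC ⟨i, rfl⟩)
    rw [← AEEqFun.coeFn_le]
    filter_upwards [hgU, hCae] with x hx hx2
    rw [hx]
    exact ciSup_le fun i => (min_le_left _ _).trans (hx2 i)

lemma dL0_zero (f : X →ₘ[m] ℝ) : dL0 m f 0 = ∫ x, min |f x| 1 ∂m := by
  refine MeasureTheory.integral_congr_ae ?_
  filter_upwards [AEEqFun.coeFn_zero (β := ℝ) (μ := m)] with x hx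
  rw [hx]
  simp

lemma RNMod.nrm_zero (R : RNMod m) : R.nrm 0 = 0 := (R.nrm_eq_zero 0).2 rfl

lemma RNMod.smul_neg_one (R : RNMod m) (u : R.M) : R.smul (-1) u = -u := by
  have h0 : R.smul 0 u = 0 := by
    have h := R.add_smul 0 0 u
    rw [add_zero] at h
    exact (left_eq_add.mp h)
  have h1 := R.add_smul 1 (-1) u
  rw [add_neg_cancel, h0, R.one_smul] at h1
  exact (neg_eq_of_add_eq_zero_right h1.symm).symm

lemma RNMod.nrm_neg (R : RNMod m) (u : R.M) : R.nrm (-u) = R.nrm u := by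
  have habs : |(-1 : X →ₘ[m] ℝ)| = 1 := by
    apply AEEqFun.ext
    filter_upwards [AEEqFun.coeFn_abs (-1 : X →ₘ[m] ℝ),
      AEEqFun.coeFn_neg (1 : X →ₘ[m] ℝ), AEEqFun.coeFn_one (β := ℝ) (μ := m)] with x h1 h2 h3
    rw [h1, h2]
    simp only [Pi.neg_apply, h3, Pi.one_apply]
    simp
  rw [← R.smul_neg_one, R.nrm_smul, habs, one_mul]

lemma RNMod.nrm_sum_le (R : RNMod m) {ι : Type*} (F : Finset ι) (u : ι → R.M) :
    R.nrm (∑ i ∈ F, u i) ≤ ∑ i ∈ F, R.nrm (u i) := by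
  induction F using Finset.cons_induction with
  | empty => rw [Finset.sum_empty, Finset.sum_empty, R.nrm_zero]
  | cons i s hi ih =>
    rw [Finset.sum_cons, Finset.sum_cons]
    exact (R.nrm_add_le _ _).trans (add_le_addL le_rfl ih)

lemma RNMod.dist_symm (R : RNMod m) (u v : R.M) : R.dist u v = R.dist v u := by
  rw [RNMod.dist, RNMod.dist, ← neg_sub, R.nrm_neg]

end Aux

/-- In a complete random normed module `R` over `L⁰(m)`, if the sequence of
norms `{|v n|}` is summable in `L⁰(m)` (partial sums order bounded), then `{v n}` is summable
in `R` and `|∑ₙ v n| ≤ ∑ₙ |v n|`. -/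
theorem statement1 {X : Type*} [MeasurableSpace X] (m : Measure X) [IsProbabilityMeasure m]
    (R : RNMod m) (hR : R.Complete) (v : ℕ → R.M)
    (hsum : ∃ S, HasL0Sum m (fun n => R.nrm (v n)) S) :
    ∃ s : R.M, HasRNMSum R v s ∧
      ∀ S : X →ₘ[m] ℝ, HasL0Sum m (fun n => R.nrm (v n)) S → R.nrm s ≤ S := by
  classical
  obtain ⟨S, hS⟩ := hsum
  set T : ℕ → X →ₘ[m] ℝ := fun n => ∑ i ∈ Finset.range n, R.nrm (v i) with hTdef
  have hS' : IsLUB (Set.range T) S := hS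
  have hae0 : ∀ᵐ x ∂m, ∀ i, (0:ℝ) ≤ (R.nrm (v i)) x := by
    rw [MeasureTheory.ae_all_iff]
    intro i
    filter_upwards [MeasureTheory.AEEqFun.coeFn_le.2 (R.nrm_nonneg (v i)),
      MeasureTheory.AEEqFun.coeFn_zero (β := ℝ) (μ := m)] with x k1 k2
    rw [k2] at k1; simpa using k1
  have haeT : ∀ᵐ x ∂m, ∀ n, (T n) x = ∑ i ∈ Finset.range n, (R.nrm (v i)) x :=
    MeasureTheory.ae_all_iff.2 fun n => coeFn_sum' (Finset.range n) fun i => R.nrm (v i)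
  have hTS : ∀ n, T n ≤ S := fun n => hS'.1 ⟨n, rfl⟩
  have haeTS : ∀ᵐ x ∂m, ∀ n, (T n) x ≤ S x :=
    MeasureTheory.ae_all_iff.2 fun n => MeasureTheory.AEEqFun.coeFn_le.2 (hTS n)
  have hTmono : Monotone T := by
    intro p q hpq
    rw [← MeasureTheory.AEEqFun.coeFn_le]
    filter_upwards [haeT, hae0] with x k1 k2
    rw [k1 p, k1 q]
    exact Finset.sum_le_sum_of_subset_of_nonneg (Finset.range_subset_range.2 hpq) fun i _ _ => k2 i
  obtain ⟨g, hgLUB, hgae⟩ := exists_isLUB_countable T S hTS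
  have hSg : S = g := hS'.unique hgLUB
  rw [← hSg] at hgae
  have hptT : ∀ᵐ x ∂m, Tendsto (fun n => (T n) x) atTop (𝓝 (S x)) := by
    filter_upwards [hgae, haeTS, haeT, hae0] with x k1 k2 k3 k4
    have hmx : Monotone fun n => (T n) x := by
      intro p q hpq
      dsimp only
      rw [k3 p, k3 q]
      exact Finset.sum_le_sum_of_subset_of_nonneg (Finset.range_subset_range.2 hpq) fun i _ _ => k4 i
    have hbx : BddAbove (Set.range fun n => (T n) x) :=
      ⟨S x, by rintro r ⟨n, rfl⟩; exact k2 n⟩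
    have heq : (fun n => min ((T n) x) (S x)) = fun n => (T n) x :=
      funext fun n => min_eq_left (k2 n)
    have hsx : (⨆ n, (T n) x) = S x := by rw [k1, heq]
    rw [← hsx]
    exact tendsto_atTop_ciSup hmx hbx
  have haeSub : ∀ᵐ x ∂m, ∀ n, (S - T n) x = S x - (T n) x :=
    MeasureTheory.ae_all_iff.2 fun n => MeasureTheory.AEEqFun.coeFn_sub S (T n)
  have hptSub : ∀ᵐ x ∂m, Tendsto (fun n => (S - T n) x) atTop (𝓝 0) := by
    filter_upwards [hptT, haeSub] with x k1 k2
    have h5 : Tendsto (fun n => S x - (T n) x) atTop (𝓝 (S x - S x)) :=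
      tendsto_const_nhds.sub k1
    rw [sub_self] at h5
    exact h5.congr fun n => (k2 n).symm
  have hεto : Tendsto (fun n => ∫ x, min |(S - T n) x| 1 ∂m) atTop (𝓝 0) :=
    tendsto_trunc _ hptSub
  have hST0 : ∀ n, (0 : X →ₘ[m] ℝ) ≤ S - T n := by
    intro n
    have h6 := sub_le_subL (hTS n) (le_refl (T n))
    have h7 : T n - T n = 0 := sub_self _
    rw [h7] at h6
    exact h6
  have hεanti : Antitone fun n => ∫ x, min |(S - T n) x| 1 ∂m := by
    intro p q hpq
    exact trunc_mono (hST0 q) (sub_le_subL le_rfl (hTmono hpq))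
  set sM : ℕ → R.M := fun n => ∑ i ∈ Finset.range n, v i with hsMdef
  have hchunk : ∀ p q, p ≤ q → R.nrm (sM q - sM p) ≤ S - T p := by
    intro p q hpq
    have h1 : sM q - sM p = ∑ i ∈ Finset.Ico p q, v i :=
      (Finset.sum_Ico_eq_sub _ hpq).symm
    have h2 : (∑ i ∈ Finset.Ico p q, R.nrm (v i)) = T q - T p :=
      Finset.sum_Ico_eq_sub _ hpq
    rw [h1]
    refine (R.nrm_sum_le _ _).trans ?_
    rw [h2]
    exact sub_le_subL (hTS q) le_rfl
  have hdist_eq : ∀ (u u' : R.M), R.dist u u' = ∫ x, min |(R.nrm (u - u')) x| 1 ∂m :=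
    fun u u' => dL0_zero _
  have hcauchy : ∀ ε > (0:ℝ), ∃ N, ∀ p ≥ N, ∀ q ≥ N, R.dist (sM p) (sM q) < ε := by
    intro ε hε
    have hev : ∀ᶠ n in atTop, (∫ x, min |(S - T n) x| 1 ∂m) < ε :=
      hεto.eventually_lt_const hε
    obtain ⟨N, hN⟩ := Filter.eventually_atTop.1 hev
    have main : ∀ p q, N ≤ p → p ≤ q → R.dist (sM p) (sM q) < ε := by
      intro p q hp hle
      calc R.dist (sM p) (sM q)
          = ∫ x, min |(R.nrm (sM p - sM q)) x| 1 ∂m := hdist_eq _ _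
        _ = ∫ x, min |(R.nrm (sM q - sM p)) x| 1 ∂m := by
            rw [← neg_sub (sM q) (sM p), R.nrm_neg]
        _ ≤ ∫ x, min |(S - T p) x| 1 ∂m := trunc_mono (R.nrm_nonneg _) (hchunk p q hle)
        _ ≤ ∫ x, min |(S - T N) x| 1 ∂m := hεanti hp
        _ < ε := hN N le_rfl
    refine ⟨N, fun p hp q hq => ?_⟩
    rcases le_total p q with hle | hle
    · exact main p q hp hle
    · rw [R.dist_symm]; exact main q p hq hle
  obtain ⟨w, hw⟩ := hR sM hcauchy
  have hIw : Tendsto (fun n => ∫ x, min |(R.nrm (sM n - w)) x| 1 ∂m) atTop (𝓝 0) := by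
    have heq : (fun n => R.dist (sM n) w) = fun n => ∫ x, min |(R.nrm (sM n - w)) x| 1 ∂m :=
      funext fun n => hdist_eq _ _
    rwa [heq] at hw
  have hkey : ∀ q, R.nrm (w - sM q) ≤ S - T q := by
    intro q
    refine le_of_bound (c := fun r => R.nrm (w - sM (r + q))) (fun r => R.nrm_nonneg _) ?_ ?_
    · intro r
      have hdecomp : w - sM q = (w - sM (r + q)) + (sM (r + q) - sM q) := by abel
      calc R.nrm (w - sM q)
          ≤ R.nrm (w - sM (r + q)) + R.nrm (sM (r + q) - sM q) := by
            rw [hdecomp]; exact R.nrm_add_le _ _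
        _ ≤ R.nrm (w - sM (r + q)) + (S - T q) :=
            add_le_addL le_rfl (hchunk q (r + q) (Nat.le_add_left q r))
        _ = (S - T q) + R.nrm (w - sM (r + q)) := add_comm _ _
    · have heq : (fun r => ∫ x, min |(R.nrm (w - sM (r + q))) x| 1 ∂m)
          = (fun n => ∫ x, min |(R.nrm (sM n - w)) x| 1 ∂m) ∘ fun r => r + q := by
        funext r
        simp only [Function.comp]
        rw [show R.nrm (w - sM (r + q)) = R.nrm (sM (r + q) - w) from by
          rw [← neg_sub (sM (r + q)) w, R.nrm_neg]]
      rw [heq]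
      exact hIw.comp (Filter.tendsto_add_atTop_nat q)
  have hbexists : ∀ n, ∃ b : X →ₘ[m] ℝ, IsLUB (tailSet R v w n) b ∧
      (0 : X →ₘ[m] ℝ) ≤ b ∧ b ≤ (S - T n) + (S - T n) := by
    intro n
    haveI : Nonempty {F : Finset ℕ // ∀ i ∈ F, n ≤ i} := ⟨⟨∅, by simp⟩⟩
    set e : {F : Finset ℕ // ∀ i ∈ F, n ≤ i} → X →ₘ[m] ℝ :=
      fun F => R.nrm (w - (sM n + ∑ i ∈ F.1, v i)) with hedef
    have hBnd : ∀ F, e F ≤ (S - T n) + (S - T n) := by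
      rintro ⟨F, hF⟩
      set N := max n (F.sup (· + 1)) with hNdef
      have hnN : n ≤ N := le_max_left _ _
      have hsub : F ⊆ Finset.Ico n N := by
        intro i hi
        refine Finset.mem_Ico.2 ⟨hF i hi, ?_⟩
        have h8 : i + 1 ≤ F.sup (· + 1) := Finset.le_sup (f := (· + 1)) hi
        have h9 : i + 1 ≤ N := h8.trans (le_max_right _ _)
        omega
      have hsdiff : ∑ i ∈ Finset.Ico n N \ F, v i + ∑ i ∈ F, v i
          = ∑ i ∈ Finset.Ico n N, v i := Finset.sum_sdiff hsub
      have hIco : ∑ i ∈ Finset.Ico n N, v i = sM N - sM n := Finset.sum_Ico_eq_sub _ hnN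
      have hdecomp : w - (sM n + ∑ i ∈ F, v i)
          = (w - sM N) + ∑ i ∈ Finset.Ico n N \ F, v i := by
        have h3 : ∑ i ∈ Finset.Ico n N \ F, v i = sM N - sM n - ∑ i ∈ F, v i := by
          rw [← hsdiff] at hIco
          rw [← hIco]; abel
        rw [h3]; abel
      calc e ⟨F, hF⟩ = R.nrm ((w - sM N) + ∑ i ∈ Finset.Ico n N \ F, v i) := by
            simp only [hedef]; rw [hdecomp]
        _ ≤ R.nrm (w - sM N) + R.nrm (∑ i ∈ Finset.Ico n N \ F, v i) := R.nrm_add_le _ _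
        _ ≤ (S - T n) + (S - T n) := by
            refine add_le_addL ?_ ?_
            · exact (hkey N).trans (sub_le_subL le_rfl (hTmono hnN))
            · refine (R.nrm_sum_le _ _).trans ?_
              have hle2 : (∑ i ∈ Finset.Ico n N \ F, R.nrm (v i))
                  ≤ ∑ i ∈ Finset.Ico n N, R.nrm (v i) := by
                rw [← MeasureTheory.AEEqFun.coeFn_le]
                filter_upwards [coeFn_sum' (Finset.Ico n N \ F) (fun i => R.nrm (v i)),
                  coeFn_sum' (Finset.Ico n N) (fun i => R.nrm (v i)), hae0] with x k1 k2 k3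
                rw [k1, k2]
                exact Finset.sum_le_sum_of_subset_of_nonneg Finset.sdiff_subset
                  fun i _ _ => k3 i
              refine hle2.trans ?_
              have h2 : (∑ i ∈ Finset.Ico n N, R.nrm (v i)) = T N - T n :=
                Finset.sum_Ico_eq_sub _ hnN
              rw [h2]
              exact sub_le_subL (hTS N) le_rfl
    obtain ⟨b, hbL, hbae⟩ := exists_isLUB_countable e _ hBnd
    have hrange : Set.range e = tailSet R v w n := by
      ext y
      constructor
      · rintro ⟨⟨F, hF⟩, rfl⟩; exact ⟨F, hF, rfl⟩
      · rintro ⟨F, hF, rfl⟩; exact ⟨⟨F, hF⟩, rfl⟩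
    rw [hrange] at hbL
    refine ⟨b, hbL, ?_, ?_⟩
    · have hmem : e ⟨∅, by simp⟩ ∈ tailSet R v w n := ⟨∅, by simp, rfl⟩
      exact (R.nrm_nonneg _).trans (hbL.1 hmem)
    · refine hbL.2 ?_
      rintro y ⟨F, hF, rfl⟩
      exact hBnd ⟨F, hF⟩
  choose b hbL hb0 hble using hbexists
  refine ⟨w, ⟨b, hbL, ?_⟩, ?_⟩
  · have hBto : Tendsto (fun n => ∫ x, min |((S - T n) + (S - T n)) x| 1 ∂m) atTop (𝓝 0) := by
      refine tendsto_trunc _ ?_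
      have haeAdd : ∀ᵐ x ∂m, ∀ n, ((S - T n) + (S - T n)) x = (S - T n) x + (S - T n) x :=
        MeasureTheory.ae_all_iff.2 fun n => MeasureTheory.AEEqFun.coeFn_add (S - T n) (S - T n)
      filter_upwards [hptSub, haeAdd] with x k1 k2
      have h5 : Tendsto (fun n => (S - T n) x + (S - T n) x) atTop (𝓝 (0 + 0)) := k1.add k1
      rw [add_zero] at h5
      exact h5.congr fun n => (k2 n).symm
    rw [TendstoL0]
    have heq : (fun n => dL0 m (b n) 0) = fun n => ∫ x, min |(b n) x| 1 ∂m :=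
      funext fun n => dL0_zero _
    rw [heq]
    refine tendsto_of_tendsto_of_tendsto_of_le_of_le tendsto_const_nhds hBto
      (fun n => trunc_nonneg _) (fun n => trunc_mono (hb0 n) (hble n))
  · intro S' hS'2
    have hS'S : S' = S := IsLUB.unique hS'2 hS
    rw [hS'S]
    have hk := hkey 0
    have h1 : sM 0 = 0 := by simp [hsMdef]
    have h2 : T 0 = 0 := by simp [hTdef]
    rw [h1, sub_zero, h2, sub_zero] at hk
    exact hk

end RNMPaper
end
end

section
/- Let (Ω, τ) be a Hausdorff space and μ ∈ 𝓜(Ω; L^0(m)) a Borel L^0-valued measure of bounded variation. Then μ is Radon (i.e., |μ| is inner regular on open sets by compact sets and outer regular on Borel sets by open sets) if and only if |μ| is inner regular on all Borel sets: |μ|(B) = sup{|μ|(K) : K ⊆ B compact} for every Borel set B. -/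
open Filter Set Topology Function
open MeasureTheory (Measure IsProbabilityMeasure)

noncomputable section

namespace RNMPaper

variable {X : Type*} [MeasurableSpace X]

variable {Ω : Type*}

variable {Ωt : Type*} [TopologicalSpace Ωt] [MeasurableSpace Ωt]

/-- Inner regularity of the total variation on open sets by compact sets:
`|μ|(U) = ⋁ {|μ|(K) : K compact, K ⊆ U}` for every open `U`. -/
def InnerRegularOnOpens (m : Measure X) (μ : BVMeasure m Ωt) : Prop :=
  ∀ U : Set Ωt, IsOpen U →
    IsLUB {g | ∃ K : Set Ωt, IsCompact K ∧ K ⊆ U ∧ g = μ.tv K} (μ.tv U)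

/-- Outer regularity of the total variation on Borel sets by open sets:
`|μ|(B) = ⋀ {|μ|(U) : U open, B ⊆ U}` for every Borel `B`. -/
def OuterRegularBorel (m : Measure X) (μ : BVMeasure m Ωt) : Prop :=
  ∀ B : Set Ωt, MeasurableSet B →
    IsGLB {g | ∃ U : Set Ωt, IsOpen U ∧ B ⊆ U ∧ g = μ.tv U} (μ.tv B)

/-- Inner regularity of the total variation on all Borel sets by compact sets. -/
def InnerRegularBorel (m : Measure X) (μ : BVMeasure m Ωt) : Prop :=
  ∀ B : Set Ωt, MeasurableSet B →
    IsLUB {g | ∃ K : Set Ωt, IsCompact K ∧ K ⊆ B ∧ g = μ.tv K} (μ.tv B)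

/-- A Borel `L⁰`-valued measure of bounded variation is Radon if its total variation is
inner regular on open sets by compact sets and outer regular on Borel sets by open sets. -/
def IsRadonL0 (m : Measure X) (μ : BVMeasure m Ωt) : Prop :=
  InnerRegularOnOpens m μ ∧ OuterRegularBorel m μ


namespace Aux

variable {m : Measure X}

instance : IsOrderedAddMonoid (X →ₘ[m] ℝ) :=
  { add_le_add_left := by
      intro a b h c
      refine MeasureTheory.AEEqFun.coeFn_le.1 ?_
      filter_upwards [MeasureTheory.AEEqFun.coeFn_le.2 h,
        MeasureTheory.AEEqFun.coeFn_add a c, MeasureTheory.AEEqFun.coeFn_add b c] with x h1 h2 h3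
      rw [h2, h3]
      simp only [Pi.add_apply]
      linarith }

lemma eq_of_dL0_eq_zero [IsProbabilityMeasure m] {f g : X →ₘ[m] ℝ}
    (h : dL0 m f g = 0) : f = g := by
  have hmeas : MeasureTheory.AEStronglyMeasurable (fun x => min |f x - g x| 1) m := by
    have hc : Continuous fun y : ℝ => min |y| 1 := continuous_abs.min continuous_const
    exact hc.comp_aestronglyMeasurable (f.aestronglyMeasurable.sub g.aestronglyMeasurable)
  have hint : MeasureTheory.Integrable (fun x => min |f x - g x| 1) m := by
    refine MeasureTheory.Integrable.mono' (MeasureTheory.integrable_const 1) hmeas ?_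
    filter_upwards with x
    rw [Real.norm_eq_abs, abs_of_nonneg (le_min (abs_nonneg _) zero_le_one)]
    exact min_le_right _ _
  have h0 : ∀ᵐ x ∂m, min |f x - g x| 1 = 0 :=
    (MeasureTheory.integral_eq_zero_iff_of_nonneg
      (fun x => le_min (abs_nonneg _) zero_le_one) hint).1 h
  refine MeasureTheory.AEEqFun.ext ?_
  filter_upwards [h0] with x hx
  rcases le_or_gt |f x - g x| 1 with hc | hc
  · rw [min_eq_left hc] at hx
    exact sub_eq_zero.1 (abs_eq_zero.1 hx)
  · rw [min_eq_right hc.le] at hx; norm_num at hx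

variable {Ω : Type*} [MeasurableSpace Ω] [IsProbabilityMeasure m] (μ : BVMeasure m Ω)

/-- Finite additivity of an `L⁰`-valued measure. -/
lemma toFun_union {S T : Set Ω} (hS : MeasurableSet S) (hT : MeasurableSet T)
    (hd : Disjoint S T) : μ.toFun (S ∪ T) = μ.toFun S + μ.toFun T := by
  classical
  set A : ℕ → Set Ω := fun n => if n = 0 then S else if n = 1 then T else ∅ with hA
  have hAm : ∀ n, MeasurableSet (A n) := by
    intro n
    simp only [hA]
    split_ifs <;> first | exact hS | exact hT | exact MeasurableSet.empty
  have hAd : Pairwise (Disjoint on A) := by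
    intro i j hij
    simp only [onFun, hA]
    split_ifs <;>
      first
        | (exfalso; omega)
        | exact hd
        | exact hd.symm
        | exact Set.disjoint_empty _
        | exact Set.empty_disjoint _
  have hAU : (⋃ n, A n) = S ∪ T := by
    ext x
    simp only [mem_iUnion, mem_union]
    constructor
    · rintro ⟨n, hn⟩
      revert hn
      simp only [hA]
      split_ifs <;> intro hn
      · exact Or.inl hn
      · exact Or.inr hn
      · exact absurd hn (notMem_empty x)
    · rintro (hx | hx)
      · exact ⟨0, by simp [hA, hx]⟩
      · exact ⟨1, by simp [hA, hx]⟩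
  have htd := μ.additive' A hAm hAd
  have hev : ∀ᶠ F : Finset ℕ in atTop,
      dL0 m (∑ i ∈ F, μ.toFun (A i)) (μ.toFun (⋃ n, A n))
        = dL0 m (μ.toFun S + μ.toFun T) (μ.toFun (S ∪ T)) := by
    filter_upwards [eventually_ge_atTop ({0, 1} : Finset ℕ)] with F hF
    have hsum : (∑ i ∈ F, μ.toFun (A i)) = μ.toFun S + μ.toFun T := by
      rw [← Finset.sum_subset hF (fun x _ hx => ?_)]
      · have h01 : (0 : ℕ) ≠ 1 := by omega
        rw [Finset.sum_insert (by simp), Finset.sum_singleton]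
        simp [hA]
      · have hx0 : x ≠ 0 := fun h => hx (by simp [h])
        have hx1 : x ≠ 1 := fun h => hx (by simp [h])
        simp [hA, hx0, hx1, μ.empty']
    rw [hsum, hAU]
  have htd' : Tendsto (fun _ : Finset ℕ =>
      dL0 m (μ.toFun S + μ.toFun T) (μ.toFun (S ∪ T))) atTop (𝓝 0) := htd.congr' hev
  have hc : dL0 m (μ.toFun S + μ.toFun T) (μ.toFun (S ∪ T)) = 0 :=
    tendsto_nhds_unique tendsto_const_nhds htd'
  exact (eq_of_dL0_eq_zero hc).symm

/-- Monotonicity of the total variation. -/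
lemma tv_mono {A B : Set Ω} (hA : MeasurableSet A) (hB : MeasurableSet B)
    (hAB : A ⊆ B) : μ.tv A ≤ μ.tv B := by
  refine (μ.htv A hA).2.2 ?_
  rintro g ⟨C, hCm, hCd, hCU, hCs⟩
  refine hCs.2 ?_
  rintro y ⟨n, rfl⟩
  set D : ℕ → Set Ω := fun k => Nat.casesOn k (B \ A) C with hD
  have hCsub : ∀ k, C k ⊆ A := fun k => hCU ▸ subset_iUnion C k
  have hDm : ∀ k, MeasurableSet (D k) := by
    rintro (_ | k)
    · exact hB.diff hA
    · exact hCm k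
  have hDd : Pairwise (Disjoint on D) := by
    rintro (_ | i) (_ | j) hij
    · exact absurd rfl hij
    · exact (Set.disjoint_sdiff_left : Disjoint (B \ A) A).mono_right (hCsub j)
    · exact ((Set.disjoint_sdiff_left : Disjoint (B \ A) A).mono_right (hCsub i)).symm
    · exact hCd (fun h => hij (by rw [h]))
  have hDU : (⋃ k, D k) = B := by
    apply Set.Subset.antisymm
    · refine Set.iUnion_subset ?_
      rintro (_ | k)
      · exact diff_subset
      · exact (hCsub k).trans hAB
    · intro x hx
      by_cases hxA : x ∈ A
      · rw [← hCU] at hxA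
        obtain ⟨k, hk⟩ := mem_iUnion.1 hxA
        exact mem_iUnion.2 ⟨k + 1, hk⟩
      · exact mem_iUnion.2 ⟨0, ⟨hx, hxA⟩⟩
  have h1 := (μ.htv B hB).1 D hDm hDd hDU (n + 1)
  calc (∑ i ∈ Finset.range n, |μ.toFun (C i)|)
      ≤ ∑ i ∈ Finset.range (n + 1), |μ.toFun (D i)| := by
        rw [Finset.sum_range_succ']
        exact le_add_of_nonneg_right (abs_nonneg _)
    _ ≤ μ.tv B := h1

/-- Superadditivity of the total variation. -/
lemma tv_superadd {A B : Set Ω} (hA : MeasurableSet A) (hB : MeasurableSet B)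
    (hd : Disjoint A B) : μ.tv A + μ.tv B ≤ μ.tv (A ∪ B) := by
  classical
  have key : ∀ g ∈ partitionSums m μ.toFun A, ∀ h ∈ partitionSums m μ.toFun B,
      g + h ≤ μ.tv (A ∪ B) := by
    rintro g ⟨C, hCm, hCd, hCU, hCs⟩ h ⟨D, hDm, hDd, hDU, hDs⟩
    set E : ℕ → Set Ω := fun n => if n % 2 = 0 then C (n / 2) else D (n / 2) with hE
    have hCsub : ∀ k, C k ⊆ A := fun k => hCU ▸ subset_iUnion C k
    have hDsub : ∀ k, D k ⊆ B := fun k => hDU ▸ subset_iUnion D k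
    have hEm : ∀ n, MeasurableSet (E n) := by
      intro n
      simp only [hE]
      split_ifs
      · exact hCm _
      · exact hDm _
    have hEd : Pairwise (Disjoint on E) := by
      intro i j hij
      simp only [onFun, hE]
      split_ifs with h1 h2 h2
      · exact hCd (show i / 2 ≠ j / 2 by omega)
      · exact hd.mono (hCsub _) (hDsub _)
      · exact hd.symm.mono (hDsub _) (hCsub _)
      · exact hDd (show i / 2 ≠ j / 2 by omega)
    have hEU : (⋃ n, E n) = A ∪ B := by
      ext x
      simp only [mem_iUnion, mem_union]
      constructor
      · rintro ⟨n, hn⟩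
        revert hn
        simp only [hE]
        split_ifs <;> intro hn
        · exact Or.inl (hCsub _ hn)
        · exact Or.inr (hDsub _ hn)
      · rintro (hx | hx)
        · rw [← hCU] at hx
          obtain ⟨k, hk⟩ := mem_iUnion.1 hx
          refine ⟨2 * k, ?_⟩
          have e1 : (2 * k) % 2 = 0 := by omega
          have e2 : (2 * k) / 2 = k := by omega
          simp only [hE, e1, e2, if_true]
          exact hk
        · rw [← hDU] at hx
          obtain ⟨k, hk⟩ := mem_iUnion.1 hx
          refine ⟨2 * k + 1, ?_⟩
          have e1 : ¬((2 * k + 1) % 2 = 0) := by omega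
          have e2 : (2 * k + 1) / 2 = k := by omega
          simp only [hE, e1, e2, if_false]
          exact hk
    have hsum : ∀ n, (∑ i ∈ Finset.range n, |μ.toFun (C i)|)
        + (∑ i ∈ Finset.range n, |μ.toFun (D i)|) ≤ μ.tv (A ∪ B) := by
      intro n
      have h2 : (∑ i ∈ Finset.range (2 * n), |μ.toFun (E i)|)
          = (∑ i ∈ Finset.range n, |μ.toFun (C i)|)
            + (∑ i ∈ Finset.range n, |μ.toFun (D i)|) := by
        induction n with
        | zero => simp
        | succ k ih =>
          have h3 : 2 * (k + 1) = (2 * k) + 1 + 1 := by ring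
          rw [h3, Finset.sum_range_succ, Finset.sum_range_succ, ih,
            Finset.sum_range_succ, Finset.sum_range_succ]
          have e1 : E (2 * k) = C k := by
            have e1a : (2 * k) % 2 = 0 := by omega
            have e1b : (2 * k) / 2 = k := by omega
            simp only [hE, e1a, e1b, if_true]
          have e2 : E (2 * k + 1) = D k := by
            have e2a : ¬((2 * k + 1) % 2 = 0) := by omega
            have e2b : (2 * k + 1) / 2 = k := by omega
            simp only [hE, e2a, e2b, if_false]
          rw [e1, e2]
          abel
      have h1 := (μ.htv _ (hA.union hB)).1 E hEm hEd hEU (2 * n)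
      rw [h2] at h1
      exact h1
    have hST : ∀ n k, (∑ i ∈ Finset.range n, |μ.toFun (C i)|)
        + (∑ i ∈ Finset.range k, |μ.toFun (D i)|) ≤ μ.tv (A ∪ B) := by
      intro n k
      calc (∑ i ∈ Finset.range n, |μ.toFun (C i)|)
            + (∑ i ∈ Finset.range k, |μ.toFun (D i)|)
          ≤ (∑ i ∈ Finset.range (max n k), |μ.toFun (C i)|)
            + (∑ i ∈ Finset.range (max n k), |μ.toFun (D i)|) :=
            add_le_add
              (Finset.sum_le_sum_of_subset_of_nonneg
                (Finset.range_subset_range.2 (le_max_left _ _)) fun i _ _ => abs_nonneg _)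
              (Finset.sum_le_sum_of_subset_of_nonneg
                (Finset.range_subset_range.2 (le_max_right _ _)) fun i _ _ => abs_nonneg _)
        _ ≤ μ.tv (A ∪ B) := hsum _
    have hg : ∀ k, g ≤ μ.tv (A ∪ B) - ∑ i ∈ Finset.range k, |μ.toFun (D i)| := by
      intro k
      refine hCs.2 ?_
      rintro y ⟨n, rfl⟩
      exact le_sub_iff_add_le.2 (hST n k)
    have hh : h ≤ μ.tv (A ∪ B) - g := by
      refine hDs.2 ?_
      rintro y ⟨k, rfl⟩
      have h3 := le_sub_iff_add_le.1 (hg k)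
      exact le_sub_iff_add_le.2 (by rwa [add_comm] at h3)
    have h4 := le_sub_iff_add_le.1 hh
    rwa [add_comm] at h4
  have hA' : μ.tv A ≤ μ.tv (A ∪ B) - μ.tv B := by
    refine (μ.htv A hA).2.2 ?_
    intro g hg
    have h5 : μ.tv B ≤ μ.tv (A ∪ B) - g := by
      refine (μ.htv B hB).2.2 ?_
      intro h hh
      exact le_sub_iff_add_le.2 (by rw [add_comm]; exact key g hg h hh)
    have h6 := le_sub_iff_add_le.1 h5
    exact le_sub_iff_add_le.2 (by rwa [add_comm] at h6)
  exact le_sub_iff_add_le.1 hA'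

/-- Subadditivity of the total variation on disjoint sets. -/
lemma tv_subadd {A B : Set Ω} (hA : MeasurableSet A) (hB : MeasurableSet B)
    (hd : Disjoint A B) : μ.tv (A ∪ B) ≤ μ.tv A + μ.tv B := by
  refine (μ.htv _ (hA.union hB)).2.2 ?_
  rintro g ⟨C, hCm, hCd, hCU, hCs⟩
  refine hCs.2 ?_
  rintro y ⟨n, rfl⟩
  have hCsub : ∀ k, C k ⊆ A ∪ B := fun k => hCU ▸ subset_iUnion C k
  have hadd : ∀ k, μ.toFun (C k) = μ.toFun (C k ∩ A) + μ.toFun (C k ∩ B) := by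
    intro k
    rw [← toFun_union μ ((hCm k).inter hA) ((hCm k).inter hB)
      (hd.mono inter_subset_right inter_subset_right)]
    congr 1
    rw [← Set.inter_union_distrib_left]
    exact (Set.inter_eq_left.2 (hCsub k)).symm
  calc (∑ i ∈ Finset.range n, |μ.toFun (C i)|)
      ≤ ∑ i ∈ Finset.range n, (|μ.toFun (C i ∩ A)| + |μ.toFun (C i ∩ B)|) :=
        Finset.sum_le_sum fun i _ => by rw [hadd i]; exact abs_add_le _ _
    _ = (∑ i ∈ Finset.range n, |μ.toFun (C i ∩ A)|)
        + (∑ i ∈ Finset.range n, |μ.toFun (C i ∩ B)|) := Finset.sum_add_distrib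
    _ ≤ μ.tv A + μ.tv B := by
        refine add_le_add ?_ ?_
        · refine (μ.htv A hA).1 (fun k => C k ∩ A) (fun k => (hCm k).inter hA)
            (fun i j hij => (hCd hij).mono inter_subset_left inter_subset_left) ?_ n
          rw [← Set.iUnion_inter, hCU, Set.union_inter_cancel_left]
        · refine (μ.htv B hB).1 (fun k => C k ∩ B) (fun k => (hCm k).inter hB)
            (fun i j hij => (hCd hij).mono inter_subset_left inter_subset_left) ?_ n
          rw [← Set.iUnion_inter, hCU, Set.union_inter_cancel_right]

lemma tv_le_add {A B C : Set Ω} (hA : MeasurableSet A) (hB : MeasurableSet B)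
    (hC : MeasurableSet C) (h : A ⊆ B ∪ C) : μ.tv A ≤ μ.tv B + μ.tv C := by
  calc μ.tv A ≤ μ.tv (B ∪ C) := tv_mono μ hA (hB.union hC) h
    _ ≤ μ.tv B + μ.tv (C \ B) := by
        have := tv_subadd μ hB (hC.diff hB) disjoint_sdiff_right
        rwa [Set.union_diff_self] at this
    _ ≤ μ.tv B + μ.tv C := add_le_add_right (tv_mono μ (hC.diff hB) hC diff_subset) _

lemma add_tv_le {A B C : Set Ω} (hA : MeasurableSet A) (hB : MeasurableSet B)
    (hC : MeasurableSet C) (hd : Disjoint A B) (hsub : A ∪ B ⊆ C) :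
    μ.tv A + μ.tv B ≤ μ.tv C :=
  (tv_superadd μ hA hB hd).trans (tv_mono μ (hA.union hB) hC hsub)

end Aux

/-- On a Hausdorff space, a Borel `L⁰`-valued measure of bounded variation
is Radon if and only if its total variation is inner regular (by compact sets) on all
Borel sets. -/
theorem statement9 {X : Type*} [MeasurableSpace X] (m : Measure X) [IsProbabilityMeasure m]
    {Ω : Type*} [TopologicalSpace Ω] [T2Space Ω] [MeasurableSpace Ω] [BorelSpace Ω]
    (μ : BVMeasure m Ω) :
    IsRadonL0 m μ ↔ InnerRegularBorel m μ := by
  constructor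
  · rintro ⟨hinner, houter⟩
    intro B hB
    constructor
    · rintro y ⟨K, hK, hKB, rfl⟩
      exact Aux.tv_mono μ hK.measurableSet hB hKB
    · intro t ht
      have hKstep : ∀ K : Set Ω, IsCompact K → μ.tv K ≤ (t + μ.tv univ) - μ.tv B := by
        intro K hK
        have hKm := hK.measurableSet
        have hKBm : MeasurableSet (K \ B) := hKm.diff hB
        have hglb := houter (K \ B) hKBm
        have hlow : (μ.tv B + μ.tv (K \ B) + μ.tv K) - (t + μ.tv univ) ∈
            lowerBounds {g | ∃ U : Set Ω, IsOpen U ∧ K \ B ⊆ U ∧ g = μ.tv U} := by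
          rintro y ⟨U, hU, hsubU, rfl⟩
          rw [sub_le_iff_le_add]
          have hUm := hU.measurableSet
          have h1 : μ.tv B ≤ μ.tv (B \ K) + μ.tv (B ∩ K) :=
            Aux.tv_le_add μ hB (hB.diff hKm) (hB.inter hKm) (fun x hx => by
              by_cases hxK : x ∈ K
              · exact Or.inr ⟨hx, hxK⟩
              · exact Or.inl ⟨hx, hxK⟩)
          have h2 : μ.tv (B ∩ K) ≤ μ.tv (K \ U) + μ.tv (B ∩ K ∩ U) :=
            Aux.tv_le_add μ (hB.inter hKm) (hKm.diff hUm) ((hB.inter hKm).inter hUm)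
              (fun x hx => by
                by_cases hxU : x ∈ U
                · exact Or.inr ⟨hx, hxU⟩
                · exact Or.inl ⟨hx.2, hxU⟩)
          have h3 : μ.tv (K \ U) ≤ t :=
            ht ⟨K \ U, hK.diff hU, fun x hx => by
              by_contra hxB
              exact hx.2 (hsubU ⟨hx.1, hxB⟩), rfl⟩
          have h4 : μ.tv (K \ B) + μ.tv (B ∩ K ∩ U) ≤ μ.tv U :=
            Aux.add_tv_le μ hKBm ((hB.inter hKm).inter hUm) hUm
              (Set.disjoint_left.2 fun x hx hy => hx.2 hy.1.1)
              (union_subset hsubU (fun x hx => hx.2))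
          have h5 : μ.tv (B \ K) + μ.tv K ≤ μ.tv univ :=
            Aux.add_tv_le μ (hB.diff hKm) hKm MeasurableSet.univ
              Set.disjoint_sdiff_left (subset_univ _)
          calc μ.tv B + μ.tv (K \ B) + μ.tv K
              ≤ (μ.tv (B \ K) + μ.tv (B ∩ K)) + μ.tv (K \ B) + μ.tv K :=
                add_le_add_left (add_le_add_left h1 _) _
            _ ≤ (μ.tv (B \ K) + (μ.tv (K \ U) + μ.tv (B ∩ K ∩ U))) + μ.tv (K \ B) + μ.tv K :=
                add_le_add_left (add_le_add_left (add_le_add_right h2 _) _) _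
            _ = (μ.tv (K \ B) + μ.tv (B ∩ K ∩ U)) + (μ.tv (K \ U) + (μ.tv (B \ K) + μ.tv K)) := by
                abel
            _ ≤ μ.tv U + (t + μ.tv univ) := add_le_add h4 (add_le_add h3 h5)
        have hle := hglb.2 hlow
        have h6 := sub_le_iff_le_add.1 hle
        have h7 : (μ.tv K + μ.tv B) + μ.tv (K \ B) ≤ (t + μ.tv univ) + μ.tv (K \ B) := by
          calc (μ.tv K + μ.tv B) + μ.tv (K \ B)
              = μ.tv B + μ.tv (K \ B) + μ.tv K := by abel
            _ ≤ μ.tv (K \ B) + (t + μ.tv univ) := h6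
            _ = (t + μ.tv univ) + μ.tv (K \ B) := by abel
        exact le_sub_iff_add_le.2 (le_of_add_le_add_right h7)
      have hsupuniv := hinner univ isOpen_univ
      have h9 : μ.tv univ ≤ (t + μ.tv univ) - μ.tv B :=
        hsupuniv.2 (by rintro y ⟨K, hK, -, rfl⟩; exact hKstep K hK)
      have h10 := le_sub_iff_add_le.1 h9
      have h11 : μ.tv B + μ.tv univ ≤ t + μ.tv univ := by
        rwa [add_comm (μ.tv univ) (μ.tv B)] at h10
      exact le_of_add_le_add_right h11
  · intro h
    refine ⟨fun U hU => h U hU.measurableSet, ?_⟩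
    intro B hB
    constructor
    · rintro y ⟨U, hU, hBU, rfl⟩
      exact Aux.tv_mono μ hB hU.measurableSet hBU
    · intro t ht
      have hsup := h Bᶜ hB.compl
      have hub : ∀ K : Set Ω, IsCompact K → K ⊆ Bᶜ →
          μ.tv K ≤ (μ.tv B + μ.tv Bᶜ) - t := by
        intro K hK hKB
        have h1 : t ≤ μ.tv Kᶜ :=
          ht ⟨Kᶜ, hK.isClosed.isOpen_compl, fun x hx hxK => (hKB hxK) hx, rfl⟩
        have h2 : μ.tv K + μ.tv Kᶜ ≤ μ.tv univ :=
          Aux.add_tv_le μ hK.measurableSet hK.measurableSet.compl MeasurableSet.univ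
            disjoint_compl_right (subset_univ _)
        have h3 : μ.tv univ ≤ μ.tv B + μ.tv Bᶜ :=
          Aux.tv_le_add μ MeasurableSet.univ hB hB.compl
            (by rw [Set.union_compl_self])
        have h4 : μ.tv K + t ≤ μ.tv B + μ.tv Bᶜ :=
          le_trans (add_le_add_right h1 _) (h2.trans h3)
        exact le_sub_iff_add_le.2 h4
      have h5 : μ.tv Bᶜ ≤ (μ.tv B + μ.tv Bᶜ) - t :=
        hsup.2 (by rintro y ⟨K, hK, hKB, rfl⟩; exact hub K hK hKB)
      have h6 := le_sub_iff_add_le.1 h5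
      have h7 : t + μ.tv Bᶜ ≤ μ.tv B + μ.tv Bᶜ := by
        rwa [add_comm (μ.tv Bᶜ) t] at h6
      exact le_of_add_le_add_right h7

end RNMPaper
end
end

section
/- Let (Ω, d) be a complete separable metric space and (X, Σ, m) a probability space. Then every Borel L^0-valued measure of bounded variation on Ω is Radon, i.e. 𝓜(Ω; L^0(m)) = 𝔐(Ω; L^0(m)). -/
open Filter Set Topology Function
open MeasureTheory (Measure IsProbabilityMeasure)

noncomputable section

namespace RNMPaper

variable {X : Type*} [MeasurableSpace X]

variable {Ω : Type*}

variable {Ωt : Type*} [TopologicalSpace Ωt] [MeasurableSpace Ωt]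

/-!
Integrating the total variation against `m` with the weight `(1 + |μ|(Ω))⁻¹` turns the
`L⁰`-valued measure `|μ|` into a finite scalar Borel measure
`λ(A) = ∫ |μ|(A) / (1 + |μ|(Ω)) dm` with the same null sets; `λ` is countably additive because
an order sum in `L⁰` is an almost everywhere pointwise sum. If `f ≤ g + |μ|(D)` for sets `D` of
arbitrarily small `λ`-measure, then `f ≤ g`, since `∫ (f - g)⁺ / (1 + |μ|(Ω)) dm ≤ λ(D)`.
A finite Borel measure on a Polish space is inner regular by compact sets and outer regular by
open sets, and the splitting `|μ|(B) = |μ|(K) + |μ|(B \ K)` transfers both properties from `λ`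
to `|μ|`.
-/

open MeasureTheory
open scoped ENNReal

section L0

variable {m : Measure X}

instance : IsOrderedAddMonoid (X →ₘ[m] ℝ) where
  add_le_add_left f g hfg h := by
    rw [← AEEqFun.coeFn_le] at hfg ⊢
    filter_upwards [AEEqFun.coeFn_add f h, AEEqFun.coeFn_add g h, hfg] with x hf hg hx
    simpa only [hf, hg, Pi.add_apply] using add_le_add hx le_rfl

lemma AEEqFun.coeFn_finsetSum {ι : Type*} (s : Finset ι) (f : ι → X →ₘ[m] ℝ) :
    ⇑(∑ i ∈ s, f i) =ᵐ[m] fun x => ∑ i ∈ s, f i x := by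
  classical
  induction s using Finset.cons_induction with
  | empty =>
    simp only [Finset.sum_empty]
    exact AEEqFun.coeFn_zero
  | cons i s _ ih =>
    filter_upwards [AEEqFun.coeFn_add (f i) (∑ j ∈ s, f j), ih] with x hadd hsum
    simp only [Finset.sum_cons, hadd, Pi.add_apply, hsum]

lemma AEEqFun.abs_sum_le {ι : Type*} (s : Finset ι) (f : ι → X →ₘ[m] ℝ) :
    |∑ i ∈ s, f i| ≤ ∑ i ∈ s, |f i| :=
  Finset.le_sum_of_subadditive _ abs_zero.le abs_add_le s f

lemma AEEqFun.ae_isLUB_apply {s : ℕ → X →ₘ[m] ℝ} {g : X →ₘ[m] ℝ} (h : IsLUB (range s) g) :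
    ∀ᵐ x ∂m, IsLUB (range fun n => s n x) (g x) := by
  have hub : ∀ᵐ x ∂m, ∀ n, s n x ≤ g x :=
    ae_all_iff.2 fun n => AEEqFun.coeFn_le.2 (h.1 ⟨n, rfl⟩)
  have hmeas : Measurable fun x => ⨆ n, s n x := Measurable.iSup fun n => (s n).measurable
  set v := AEEqFun.mk _ hmeas.aestronglyMeasurable
  have hgv : g ≤ v := h.2 <| by
    rintro _ ⟨n, rfl⟩
    rw [← AEEqFun.coeFn_le]
    filter_upwards [hub, AEEqFun.coeFn_mk _ hmeas.aestronglyMeasurable] with x hx hv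
    exact hv ▸ le_ciSup ⟨g x, by rintro _ ⟨k, rfl⟩; exact hx k⟩ n
  filter_upwards [hub, AEEqFun.coeFn_le.2 hgv, AEEqFun.coeFn_mk _ hmeas.aestronglyMeasurable]
    with x hx hgx hv
  refine ⟨by rintro _ ⟨n, rfl⟩; exact hx n, fun b hb => ?_⟩
  exact (hgx.trans_eq hv).trans (ciSup_le fun n => hb ⟨n, rfl⟩)

lemma AEEqFun.ae_ofReal_eq_tsum_of_isLUB {f : ℕ → X →ₘ[m] ℝ} {g : X →ₘ[m] ℝ}
    (hf : ∀ n, 0 ≤ f n) (h : IsLUB (range fun n => ∑ k ∈ Finset.range n, f k) g) :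
    ∀ᵐ x ∂m, ENNReal.ofReal (g x) = ∑' n, ENNReal.ofReal (f n x) := by
  have hnn : ∀ᵐ x ∂m, ∀ n, 0 ≤ f n x := ae_all_iff.2 fun n => by
    filter_upwards [AEEqFun.coeFn_le.2 (hf n), AEEqFun.coeFn_zero (β := ℝ) (μ := m)]
      with x hx h0
    rwa [h0] at hx
  have hsum : ∀ᵐ x ∂m, ∀ n, (∑ k ∈ Finset.range n, f k) x = ∑ k ∈ Finset.range n, f k x :=
    ae_all_iff.2 fun n => AEEqFun.coeFn_finsetSum _ _
  filter_upwards [AEEqFun.ae_isLUB_apply h, hnn, hsum] with x hx hnn hsum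
  rw [ENNReal.tsum_eq_iSup_nat, ← hx.ciSup_eq, Monotone.map_ciSup_of_continuousAt
    ENNReal.continuous_ofReal.continuousAt ENNReal.ofReal_mono hx.bddAbove]
  refine iSup_congr fun n => ?_
  rw [hsum n, ENNReal.ofReal_sum_of_nonneg fun k _ => hnn k]

lemma min_add_le_min_one_add_min_one {a b : ℝ} (ha : 0 ≤ a) (hb : 0 ≤ b) :
    min (a + b) 1 ≤ min a 1 + min b 1 := by
  simp only [min_def]
  split_ifs <;> linarith

lemma dL0_nonneg (f g : X →ₘ[m] ℝ) : 0 ≤ dL0 m f g :=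
  integral_nonneg fun _ => le_min (abs_nonneg _) zero_le_one

section dL0

variable [IsFiniteMeasure m]

lemma integrable_min_one {h : X → ℝ} (hm : AEStronglyMeasurable h m) (h0 : 0 ≤ h) :
    Integrable (fun x => min (h x) 1) m := by
  refine (integrable_const (1 : ℝ)).mono' (hm.inf aestronglyMeasurable_const) ?_
  refine Eventually.of_forall fun x => ?_
  rw [Real.norm_eq_abs, abs_of_nonneg (le_min (h0 x) zero_le_one)]
  exact min_le_right _ _

lemma ae_eq_zero_of_integral_min_one_eq_zero {h : X → ℝ} (hm : AEStronglyMeasurable h m)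
    (h0 : 0 ≤ h) (hi : ∫ x, min (h x) 1 ∂m = 0) : h =ᵐ[m] 0 := by
  filter_upwards [(integral_eq_zero_iff_of_nonneg (fun x => le_min (h0 x) zero_le_one)
    (integrable_min_one hm h0)).1 hi] with x hx
  rcases min_choice (h x) 1 with hmin | hmin
  · exact hmin ▸ hx
  · exact absurd (hmin ▸ hx : (1 : ℝ) = 0) one_ne_zero

lemma integrable_min_abs_sub_one (f g : X →ₘ[m] ℝ) :
    Integrable (fun x => min |f x - g x| 1) m :=
  integrable_min_one (f.measurable.sub g.measurable).abs.aestronglyMeasurable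
    fun _ => abs_nonneg _

lemma eq_of_dL0_eq_zero {f g : X →ₘ[m] ℝ} (h : dL0 m f g = 0) : f = g := by
  refine AEEqFun.ext ?_
  filter_upwards [ae_eq_zero_of_integral_min_one_eq_zero
    (f.measurable.sub g.measurable).abs.aestronglyMeasurable (fun _ => abs_nonneg _) h]
    with x hx
  exact sub_eq_zero.1 (abs_eq_zero.1 hx)

lemma dL0_abs_le (f g : X →ₘ[m] ℝ) : dL0 m |f| |g| ≤ dL0 m f g := by
  refine integral_mono_ae (integrable_min_abs_sub_one _ _) (integrable_min_abs_sub_one _ _) ?_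
  filter_upwards [AEEqFun.coeFn_abs f, AEEqFun.coeFn_abs g] with x hf hg
  rw [hf, hg]
  exact min_le_min_right _ (abs_abs_sub_abs_le_abs_sub _ _)

lemma dL0_add_le (f g f' g' : X →ₘ[m] ℝ) :
    dL0 m (f + f') (g + g') ≤ dL0 m f g + dL0 m f' g' := by
  rw [dL0, dL0, dL0, ← integral_add (integrable_min_abs_sub_one f g)
    (integrable_min_abs_sub_one f' g')]
  refine integral_mono_ae (integrable_min_abs_sub_one _ _)
    ((integrable_min_abs_sub_one f g).add (integrable_min_abs_sub_one f' g')) ?_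
  filter_upwards [AEEqFun.coeFn_add f f', AEEqFun.coeFn_add g g'] with x hf hg
  rw [hf, hg, Pi.add_apply, Pi.add_apply, add_sub_add_comm]
  exact (min_le_min_right _ (abs_add_le _ _)).trans
    (min_add_le_min_one_add_min_one (abs_nonneg _) (abs_nonneg _))

lemma dL0_sum_le {ι : Type*} (s : Finset ι) (f g : ι → X →ₘ[m] ℝ) :
    dL0 m (∑ i ∈ s, f i) (∑ i ∈ s, g i) ≤ ∑ i ∈ s, dL0 m (f i) (g i) := by
  classical
  induction s using Finset.cons_induction with
  | empty => simp [dL0]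
  | cons i s _ ih =>
    simp only [Finset.sum_cons]
    exact (dL0_add_le _ _ _ _).trans (add_le_add le_rfl ih)

lemma le_of_tendsto_dL0 {f : ℕ → X →ₘ[m] ℝ} {g u : X →ₘ[m] ℝ} (hle : ∀ n, f n ≤ u)
    (h : Tendsto (fun n => dL0 m (f n) g) atTop (𝓝 0)) : g ≤ u := by
  set e : X → ℝ := fun x => max (g x - u x) 0
  have he : Measurable e := (g.measurable.sub u.measurable).max measurable_const
  have hbound : ∀ n, ∫ x, min (e x) 1 ∂m ≤ dL0 m (f n) g := fun n => by
    refine integral_mono_ae (integrable_min_one he.aestronglyMeasurable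
      fun _ => le_max_right _ _) (integrable_min_abs_sub_one _ _) ?_
    filter_upwards [AEEqFun.coeFn_le.2 (hle n)] with x hx
    refine min_le_min_right _ (max_le ?_ (abs_nonneg _))
    rw [abs_sub_comm]
    linarith [le_abs_self (g x - f n x)]
  have hzero : ∫ x, min (e x) 1 ∂m = 0 :=
    le_antisymm (ge_of_tendsto h (Eventually.of_forall hbound))
      (integral_nonneg fun _ => le_min (le_max_right _ _) zero_le_one)
  rw [← AEEqFun.coeFn_le]
  filter_upwards [ae_eq_zero_of_integral_min_one_eq_zero he.aestronglyMeasurable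
    (fun _ => le_max_right _ _) hzero] with x hx
  exact sub_nonpos.1 ((le_max_left _ _).trans_eq hx)

end dL0

end L0

section Variation

variable {m : Measure X} [MeasurableSpace Ω]

lemma L0Measure.tendsto_sum_range (ν : L0Measure m Ω) {A : ℕ → Set Ω}
    (hA : ∀ n, MeasurableSet (A n)) (hd : Pairwise (Disjoint on A)) :
    Tendsto (fun n => dL0 m (∑ i ∈ Finset.range n, ν.toFun (A i)) (ν.toFun (⋃ n, A n)))
      atTop (𝓝 0) :=
  (ν.additive' A hA hd).comp tendsto_finset_range

lemma L0Measure.toFun_union [IsFiniteMeasure m] (ν : L0Measure m Ω) {A B : Set Ω}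
    (hA : MeasurableSet A) (hB : MeasurableSet B) (hAB : Disjoint A B) :
    ν.toFun (A ∪ B) = ν.toFun A + ν.toFun B := by
  set C : ℕ → Set Ω := fun n => if n = 0 then A else if n = 1 then B else ∅
  have hC : ∀ n, MeasurableSet (C n) := fun n => by
    simp only [C]; split_ifs
    exacts [hA, hB, .empty]
  have hd : Pairwise (Disjoint on C) := (pairwise_disjoint_on C).2 fun i j hij => by
    obtain rfl | hj := eq_or_ne j 1
    · obtain rfl : i = 0 := by omega
      simpa [C] using hAB
    · simp [C, hj, show j ≠ 0 by omega]
  have hU : (⋃ n, C n) = A ∪ B := by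
    refine (iUnion_subset fun n => ?_).antisymm
      (union_subset (subset_iUnion C 0) (subset_iUnion C 1))
    simp only [C]; split_ifs
    exacts [subset_union_left, subset_union_right, empty_subset _]
  have hsum : ∀ n ≥ 2, ∑ i ∈ Finset.range n, ν.toFun (C i) = ν.toFun A + ν.toFun B := by
    intro n hn
    obtain ⟨k, rfl⟩ := Nat.exists_eq_add_of_le' hn
    simp [Finset.sum_range_succ', C, ν.empty', add_comm]
  have hlim := ν.tendsto_sum_range hC hd
  rw [hU] at hlim
  refine (eq_of_dL0_eq_zero (tendsto_nhds_unique ?_ hlim)).symm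
  exact tendsto_const_nhds.congr' ((eventually_ge_atTop 2).mono fun n hn => by
    simp only [hsum n hn])

namespace BVMeasure

variable (μ : BVMeasure m Ω)

lemma sum_range_abs_le_tv {A : Set Ω} (hA : MeasurableSet A) {C : ℕ → Set Ω}
    (hC : ∀ n, MeasurableSet (C n)) (hd : Pairwise (Disjoint on C)) (hCA : (⋃ n, C n) ⊆ A)
    (n : ℕ) : ∑ i ∈ Finset.range n, |μ.toFun (C i)| ≤ μ.tv A := by
  -- `C` together with the remainder `A \ ⋃ n, C n` partitions `A`
  set D : ℕ → Set Ω := fun k => Nat.casesOn k (A \ ⋃ n, C n) C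
  have hDm : ∀ k, MeasurableSet (D k) := by
    rintro (_ | k)
    exacts [hA.diff (.iUnion hC), hC k]
  have hDd : Pairwise (Disjoint on D) := by
    rintro (_ | i) (_ | j) hij
    · exact absurd rfl hij
    · exact disjoint_sdiff_left.mono_right (subset_iUnion C j)
    · exact disjoint_sdiff_right.mono_left (subset_iUnion C i)
    · exact hd fun h => hij (congrArg Nat.succ h)
  have hDU : (⋃ k, D k) = A := by
    refine (iUnion_subset ?_).antisymm fun x hx => ?_
    · rintro (_ | k)
      exacts [sdiff_subset, (subset_iUnion C k).trans hCA]
    · by_cases hxC : x ∈ ⋃ n, C n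
      · obtain ⟨k, hk⟩ := mem_iUnion.1 hxC
        exact mem_iUnion.2 ⟨k + 1, hk⟩
      · exact mem_iUnion.2 ⟨0, hx, hxC⟩
  have hpart := (μ.htv A hA).1 D hDm hDd hDU (n + 1)
  rw [Finset.sum_range_succ'] at hpart
  exact (le_add_of_nonneg_right (abs_nonneg _)).trans hpart

lemma sum_abs_le_tv {ι : Type*} [Encodable ι] {A : Set Ω} (hA : MeasurableSet A)
    {C : ι → Set Ω} (hC : ∀ i, MeasurableSet (C i)) (hd : Pairwise (Disjoint on C))
    (hCA : (⋃ i, C i) ⊆ A) (s : Finset ι) : ∑ i ∈ s, |μ.toFun (C i)| ≤ μ.tv A := by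
  set D : ℕ → Set Ω := fun n => ⋃ i ∈ Encodable.decode₂ ι n, C i
  have hD : ∀ i, D (Encodable.encode i) = C i := fun i => by
    simp [D, Encodable.decode₂_encode]
  obtain ⟨N, hN⟩ := (s.image Encodable.encode).exists_nat_subset_range
  calc ∑ i ∈ s, |μ.toFun (C i)|
      = ∑ n ∈ s.image Encodable.encode, |μ.toFun (D n)| := by
        rw [Finset.sum_image fun i _ j _ h => Encodable.encode_injective h]
        simp only [hD]
    _ ≤ ∑ n ∈ Finset.range N, |μ.toFun (D n)| :=
        Finset.sum_le_sum_of_subset_of_nonneg hN fun _ _ _ => abs_nonneg _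
    _ ≤ μ.tv A := μ.sum_range_abs_le_tv hA
        (fun _ => Encodable.iUnion_decode₂_cases (C := MeasurableSet) .empty hC)
        (Encodable.iUnion_decode₂_disjoint_on hd)
        ((Encodable.iUnion_decode₂ C).subset.trans hCA) N

lemma tv_le_of_forall_sum_le {A : Set Ω} (hA : MeasurableSet A) {u : X →ₘ[m] ℝ}
    (hu : ∀ B : ℕ → Set Ω, (∀ n, MeasurableSet (B n)) → Pairwise (Disjoint on B) →
      (⋃ n, B n) = A → ∀ n, ∑ i ∈ Finset.range n, |μ.toFun (B i)| ≤ u) :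
    μ.tv A ≤ u := by
  refine (μ.htv A hA).2.2 ?_
  rintro g ⟨B, hBm, hBd, hBU, hg⟩
  exact hg.2 (by rintro _ ⟨n, rfl⟩; exact hu B hBm hBd hBU n)

lemma tv_nonneg {A : Set Ω} (hA : MeasurableSet A) : 0 ≤ μ.tv A := by
  simpa using μ.sum_range_abs_le_tv hA (C := fun _ => ∅) (fun _ => .empty)
    (fun _ _ _ => disjoint_empty _) (by simp) 0

lemma tv_empty : μ.tv ∅ = 0 := by
  refine le_antisymm (μ.tv_le_of_forall_sum_le .empty fun B _ _ hBU n => ?_)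
    (μ.tv_nonneg .empty)
  have hB : ∀ i, B i = ∅ := fun i => subset_empty_iff.1 (hBU ▸ subset_iUnion B i)
  simp [hB, μ.empty']

lemma tv_mono {A B : Set Ω} (hA : MeasurableSet A) (hB : MeasurableSet B) (hAB : A ⊆ B) :
    μ.tv A ≤ μ.tv B :=
  μ.tv_le_of_forall_sum_le hA fun _ hCm hCd hCU n =>
    μ.sum_range_abs_le_tv hB hCm hCd (hCU ▸ hAB) n

lemma tv_union [IsFiniteMeasure m] {A B : Set Ω} (hA : MeasurableSet A) (hB : MeasurableSet B)
    (hAB : Disjoint A B) : μ.tv (A ∪ B) = μ.tv A + μ.tv B := by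
  refine le_antisymm (μ.tv_le_of_forall_sum_le (hA.union hB) fun C hCm hCd hCU n => ?_) ?_
  · have hsplit : ∀ i, μ.toFun (C i) = μ.toFun (C i ∩ A) + μ.toFun (C i ∩ B) := fun i => by
      rw [← μ.toL0Measure.toFun_union ((hCm i).inter hA) ((hCm i).inter hB)
        (hAB.mono inter_subset_right inter_subset_right), ← inter_union_distrib_left,
        inter_eq_left.2 (hCU ▸ subset_iUnion C i)]
    have hpiece : ∀ {E : Set Ω}, MeasurableSet E →
        ∑ i ∈ Finset.range n, |μ.toFun (C i ∩ E)| ≤ μ.tv E := fun hE =>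
      μ.sum_range_abs_le_tv hE (fun i => (hCm i).inter hE)
        (fun _ _ hij => (hCd hij).mono inter_subset_left inter_subset_left)
        (iUnion_subset fun _ => inter_subset_right) n
    calc ∑ i ∈ Finset.range n, |μ.toFun (C i)|
        ≤ ∑ i ∈ Finset.range n, (|μ.toFun (C i ∩ A)| + |μ.toFun (C i ∩ B)|) :=
          Finset.sum_le_sum fun i _ => hsplit i ▸ abs_add_le _ _
      _ ≤ μ.tv A + μ.tv B := Finset.sum_add_distrib.trans_le (add_le_add (hpiece hA) (hpiece hB))
  · refine ((μ.htv A hA).2.add (μ.htv B hB).2).2 ?_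
    rintro _ ⟨g, ⟨P, hPm, hPd, rfl, hg⟩, h, ⟨Q, hQm, hQd, rfl, hh⟩, rfl⟩
    refine (hg.add hh).2 ?_
    rintro _ ⟨_, ⟨p, rfl⟩, _, ⟨q, rfl⟩, rfl⟩
    have hsub := μ.sum_abs_le_tv (hA.union hB) (C := Sum.elim P Q)
      (fun | .inl i => hPm i | .inr j => hQm j)
      (by
        rintro (i | i) (j | j) hij
        · exact hPd fun h => hij (congrArg _ h)
        · exact hAB.mono (subset_iUnion P i) (subset_iUnion Q j)
        · exact hAB.symm.mono (subset_iUnion Q i) (subset_iUnion P j)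
        · exact hQd fun h => hij (congrArg _ h))
      (by simp [iUnion_sum]) ((Finset.range p).disjSum (Finset.range q))
    simpa [Finset.sum_disjSum] using hsub

def controlWeight (x : X) : ℝ≥0∞ := (1 + ENNReal.ofReal (μ.tv univ x))⁻¹

lemma measurable_controlWeight : Measurable μ.controlWeight :=
  (measurable_const.add (μ.tv univ).measurable.ennreal_ofReal).inv

lemma controlWeight_ne_zero (x : X) : μ.controlWeight x ≠ 0 :=
  ENNReal.inv_ne_zero.2 (ENNReal.add_ne_top.2 ⟨ENNReal.one_ne_top, ENNReal.ofReal_ne_top⟩)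

variable [IsFiniteMeasure m]

lemma tv_biUnion_range {F : ℕ → Set Ω} (hF : ∀ n, MeasurableSet (F n))
    (hd : Pairwise (Disjoint on F)) (n : ℕ) :
    μ.tv (⋃ k ∈ Finset.range n, F k) = ∑ k ∈ Finset.range n, μ.tv (F k) := by
  induction n with
  | zero => simpa using μ.tv_empty
  | succ n ih =>
    rw [Finset.range_add_one, Finset.set_biUnion_insert, union_comm,
      μ.tv_union ((Finset.range n).measurableSet_biUnion fun k _ => hF k) (hF n)
        (disjoint_iUnion₂_left.2 fun k hk => hd (Finset.mem_range.1 hk).ne),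
      ih, Finset.sum_insert Finset.notMem_range_self, add_comm]

lemma isLUB_tv_iUnion {F : ℕ → Set Ω} (hF : ∀ n, MeasurableSet (F n))
    (hd : Pairwise (Disjoint on F)) :
    IsLUB (range fun n => ∑ k ∈ Finset.range n, μ.tv (F k)) (μ.tv (⋃ n, F n)) := by
  refine ⟨?_, fun u hu => ?_⟩
  · rintro _ ⟨n, rfl⟩
    dsimp only
    rw [← μ.tv_biUnion_range hF hd n]
    exact μ.tv_mono ((Finset.range n).measurableSet_biUnion fun k _ => hF k) (.iUnion hF)
      (iUnion₂_subset fun k _ => subset_iUnion F k)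
  refine (μ.htv _ (.iUnion hF)).2.2 ?_
  rintro g ⟨B, hBm, hBd, hBU, hg⟩
  refine hg.2 ?_
  rintro _ ⟨n, rfl⟩
  -- approximate each `μ (B i)` by the partial sums of `μ (B i ∩ F k)` over `k`
  set q : ℕ → X →ₘ[m] ℝ := fun K =>
    ∑ i ∈ Finset.range n, |∑ k ∈ Finset.range K, μ.toFun (B i ∩ F k)|
  have hqu : ∀ K, q K ≤ u := fun K => calc
    q K ≤ ∑ i ∈ Finset.range n, ∑ k ∈ Finset.range K, |μ.toFun (B i ∩ F k)| :=
        Finset.sum_le_sum fun i _ => AEEqFun.abs_sum_le _ _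
    _ = ∑ k ∈ Finset.range K, ∑ i ∈ Finset.range n, |μ.toFun (B i ∩ F k)| := Finset.sum_comm
    _ ≤ ∑ k ∈ Finset.range K, μ.tv (F k) := Finset.sum_le_sum fun k _ =>
        μ.sum_range_abs_le_tv (hF k) (fun i => (hBm i).inter (hF k))
          (fun _ _ hij => (hBd hij).mono inter_subset_left inter_subset_left)
          (iUnion_subset fun _ => inter_subset_right) n
    _ ≤ u := hu ⟨K, rfl⟩
  have hB : ∀ i, Tendsto (fun K =>
      dL0 m (∑ k ∈ Finset.range K, μ.toFun (B i ∩ F k)) (μ.toFun (B i))) atTop (𝓝 0) := by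
    intro i
    have hlim := μ.toL0Measure.tendsto_sum_range (fun k => (hBm i).inter (hF k))
      (fun _ _ hab => (hd hab).mono inter_subset_right inter_subset_right)
    rwa [← inter_iUnion, inter_eq_left.2 (hBU ▸ subset_iUnion B i)] at hlim
  refine le_of_tendsto_dL0 hqu (squeeze_zero (fun _ => dL0_nonneg _ _) (fun K => ?_)
    (by simpa using tendsto_finsetSum (Finset.range n) fun i _ => hB i))
  exact (dL0_sum_le _ _ _).trans (Finset.sum_le_sum fun i _ => dL0_abs_le _ _)

lemma lintegral_tv_iUnion {F : ℕ → Set Ω} (hF : ∀ n, MeasurableSet (F n))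
    (hd : Pairwise (Disjoint on F)) :
    ∫⁻ x, ENNReal.ofReal (μ.tv (⋃ n, F n) x) * μ.controlWeight x ∂m =
      ∑' n, ∫⁻ x, ENNReal.ofReal (μ.tv (F n) x) * μ.controlWeight x ∂m := by
  rw [← lintegral_tsum (f := fun n x => ENNReal.ofReal (μ.tv (F n) x) * μ.controlWeight x)
    fun n => ((μ.tv (F n)).measurable.ennreal_ofReal.mul μ.measurable_controlWeight).aemeasurable]
  refine lintegral_congr_ae ?_
  filter_upwards [AEEqFun.ae_ofReal_eq_tsum_of_isLUB (fun n => μ.tv_nonneg (hF n))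
    (μ.isLUB_tv_iUnion hF hd)] with x hx
  rw [hx, ENNReal.tsum_mul_right]

def controlMeasure : Measure Ω :=
  Measure.ofMeasurable (fun A _ => ∫⁻ x, ENNReal.ofReal (μ.tv A x) * μ.controlWeight x ∂m)
    (by
      rw [μ.tv_empty, ← lintegral_zero]
      refine lintegral_congr_ae ?_
      filter_upwards [AEEqFun.coeFn_zero (β := ℝ) (μ := m)] with x hx
      rw [hx, Pi.zero_apply, ENNReal.ofReal_zero, zero_mul])
    fun _ hF hd => μ.lintegral_tv_iUnion hF hd

lemma controlMeasure_apply {A : Set Ω} (hA : MeasurableSet A) :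
    μ.controlMeasure A = ∫⁻ x, ENNReal.ofReal (μ.tv A x) * μ.controlWeight x ∂m :=
  Measure.ofMeasurable_apply A hA

instance : IsFiniteMeasure μ.controlMeasure := by
  refine ⟨(μ.controlMeasure_apply .univ).trans_lt ?_⟩
  refine (lintegral_mono fun x => ?_).trans_lt (lintegral_one.trans_lt (measure_lt_top m univ))
  rw [controlWeight, ← div_eq_mul_inv]
  exact ENNReal.div_le_of_le_mul (by rw [one_mul]; exact le_add_self)

lemma le_of_forall_controlMeasure_lt {f g : X →ₘ[m] ℝ}
    (h : ∀ ε : ℝ≥0∞, 0 < ε → ∃ D : Set Ω, MeasurableSet D ∧ μ.controlMeasure D < ε ∧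
      f ≤ g + μ.tv D) : f ≤ g := by
  set I := ∫⁻ x, ENNReal.ofReal (f x - g x) * μ.controlWeight x ∂m
  have hI : I = 0 := by
    by_contra hne
    obtain ⟨D, hD, hDε, hfg⟩ := h I (pos_iff_ne_zero.2 hne)
    refine (hDε.trans_le' ?_).false
    rw [μ.controlMeasure_apply hD]
    refine lintegral_mono_ae ?_
    filter_upwards [AEEqFun.coeFn_le.2 hfg, AEEqFun.coeFn_add g (μ.tv D)] with x hx hadd
    rw [hadd, Pi.add_apply] at hx
    gcongr
    linarith
  rw [← AEEqFun.coeFn_le]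
  filter_upwards [(lintegral_eq_zero_iff' ((f.measurable.sub g.measurable).ennreal_ofReal.mul
    μ.measurable_controlWeight).aemeasurable).1 hI] with x hx
  have := (mul_eq_zero.1 hx).resolve_right (μ.controlWeight_ne_zero x)
  exact sub_nonpos.1 (ENNReal.ofReal_eq_zero.1 this)

lemma isLUB_tv_of_forall_controlMeasure_sdiff_lt {p : Set Ω → Prop}
    (hp : ∀ K, p K → MeasurableSet K) {B : Set Ω} (hB : MeasurableSet B)
    (h : ∀ ε : ℝ≥0∞, 0 < ε → ∃ K ⊆ B, p K ∧ μ.controlMeasure (B \ K) < ε) :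
    IsLUB {g | ∃ K, p K ∧ K ⊆ B ∧ g = μ.tv K} (μ.tv B) := by
  refine ⟨?_, fun u hu => μ.le_of_forall_controlMeasure_lt fun ε hε => ?_⟩
  · rintro _ ⟨K, hK, hKB, rfl⟩
    exact μ.tv_mono (hp K hK) hB hKB
  obtain ⟨K, hKB, hK, hε⟩ := h ε hε
  refine ⟨B \ K, hB.diff (hp K hK), hε, ?_⟩
  calc μ.tv B = μ.tv K + μ.tv (B \ K) := by
        rw [← μ.tv_union (hp K hK) (hB.diff (hp K hK)) disjoint_sdiff_right,
          union_sdiff_cancel hKB]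
    _ ≤ u + μ.tv (B \ K) := add_le_add (hu ⟨K, hK, hKB, rfl⟩) le_rfl

lemma isGLB_tv_of_forall_controlMeasure_sdiff_lt {p : Set Ω → Prop}
    (hp : ∀ U, p U → MeasurableSet U) {B : Set Ω} (hB : MeasurableSet B)
    (h : ∀ ε : ℝ≥0∞, 0 < ε → ∃ U ⊇ B, p U ∧ μ.controlMeasure (U \ B) < ε) :
    IsGLB {g | ∃ U, p U ∧ B ⊆ U ∧ g = μ.tv U} (μ.tv B) := by
  refine ⟨?_, fun l hl => μ.le_of_forall_controlMeasure_lt fun ε hε => ?_⟩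
  · rintro _ ⟨U, hU, hBU, rfl⟩
    exact μ.tv_mono hB (hp U hU) hBU
  obtain ⟨U, hBU, hU, hε⟩ := h ε hε
  refine ⟨U \ B, (hp U hU).diff hB, hε, ?_⟩
  rw [← μ.tv_union hB ((hp U hU).diff hB) disjoint_sdiff_right, union_sdiff_cancel hBU]
  exact hl ⟨U, hU, hBU, rfl⟩

end BVMeasure

end Variation

/-- On a complete separable metric space, every Borel `L⁰`-valued measure
of bounded variation is Radon: `𝓜(Ω; L⁰(m)) = 𝔐(Ω; L⁰(m))`. -/
theorem statement10 {X : Type*} [MeasurableSpace X] (m : Measure X) [IsProbabilityMeasure m]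
    {Ω : Type*} [MetricSpace Ω] [CompleteSpace Ω] [TopologicalSpace.SeparableSpace Ω]
    [MeasurableSpace Ω] [BorelSpace Ω] (μ : BVMeasure m Ω) :
    IsRadonL0 m μ := by
  have hfin : ∀ A, μ.controlMeasure A ≠ ∞ := measure_ne_top μ.controlMeasure
  refine ⟨fun U hU => ?_, fun B hB => ?_⟩
  · exact μ.isLUB_tv_of_forall_controlMeasure_sdiff_lt (fun K hK => hK.measurableSet)
      hU.measurableSet fun ε hε => hU.measurableSet.exists_isCompact_sdiff_lt (hfin U) hε.ne'
  · refine μ.isGLB_tv_of_forall_controlMeasure_sdiff_lt (fun U hU => hU.measurableSet)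
      hB fun ε hε => ?_
    obtain ⟨U, hBU, hU, -, hε⟩ := hB.exists_isOpen_sdiff_lt (hfin B) hε.ne'
    exact ⟨U, hBU, hU, hε⟩

end RNMPaper
end
end
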